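/- arXiv:1308.1161 — 7 statements merged into one kernel-verified Lean document; each statement's English description precedes it below -/
import Mathlib

section
/- Feng–Xiang setting; let t be an odd prime with gcd(t, p1) = 1, let γ be a primitive element of F_{q^t}, ω = γ^{(q^t−1)/(q−1)}, let D = ⋃_{i∈I} ω^i⟨ω^N⟩ be the Feng–Xiang skew Hadamard difference set with index set I, D' = ⋃_{i∈I} γ^i⟨γ^N⟩ its lift to F_{q^t}, and let t^{-1} denote the inverse of t modulo N. Fix a ∈ F_p^* \ {1}. If the set {T_{ω^ℓ,a}(D^{(t^{-1})}) mod t : 0 ≤ ℓ ≤ N−1} ⊆ Z/tZ contains exactly u distinct elements, then the set {T_{γ^ℓ,a}(D') mod t : 0 ≤ ℓ ≤ N−1} ⊆ Z/tZ also contains exactly u distinct elements. -/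
lemma mul_pred_add (aa nn : ℕ) (h : 1 ≤ nn) : aa * (nn - 1) + aa = aa * nn := by
  cases nn with
  | zero => omega
  | succ n' => simp [Nat.succ_sub_one]; ring

lemma field_pow_eq_pow_iff {K : Type*} [Field K] {g : K} (hg : g ≠ 0) (k k' : ℕ) :
    g ^ k = g ^ k' ↔ k ≡ k' [MOD orderOf g] := by
  have h1 : orderOf (Units.mk0 g hg) = orderOf g := by
    rw [← orderOf_units]; rfl
  rw [← h1, ← pow_eq_pow_iff_modEq]
  constructor
  · intro h
    ext
    push_cast [Units.val_pow_eq_pow_val]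
    exact h
  · intro h
    have := congrArg Units.val h
    simpa [Units.val_pow_eq_pow_val] using this

lemma pow_mem_iff {K : Type*} [Monoid K] {g : K} {nn N : ℕ}
    (hgeq : ∀ k k' : ℕ, g ^ k = g ^ k' ↔ k ≡ k' [MOD nn])
    (hnn : 1 ≤ nn) (hNn : N ∣ nn) (I : Finset ℕ) (c : ℕ → ℕ) (k : ℕ) :
    (∃ i ∈ I, ∃ j : ℕ, g ^ k = g ^ (c i + N * j)) ↔
      ∃ i ∈ I, (k : ZMod N) = (c i : ZMod N) := by
  constructor
  · rintro ⟨i, hi, j, hj⟩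
    refine ⟨i, hi, ?_⟩
    have h1 : k ≡ c i + N * j [MOD nn] := (hgeq _ _).mp hj
    have h2 : k ≡ c i + N * j [MOD N] := h1.of_dvd hNn
    rw [(ZMod.natCast_eq_natCast_iff _ _ _).mpr h2]
    push_cast
    simp [ZMod.natCast_self]
  · rintro ⟨i, hi, hk⟩
    have hcast : k ≡ c i [MOD N] := (ZMod.natCast_eq_natCast_iff _ _ _).mp hk
    set M := k + nn * (c i + 1) with hM
    have hMk : k ≡ M [MOD nn] := by
      simp [hM, Nat.ModEq, Nat.add_mul_mod_self_left]
    have hciM : c i ≤ M := by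
      have : c i + 1 ≤ nn * (c i + 1) := Nat.le_mul_of_pos_left _ hnn
      omega
    have hMc : M ≡ c i [MOD N] := by
      have h0 : nn * (c i + 1) ≡ 0 [MOD N] := Nat.modEq_zero_iff_dvd.mpr (hNn.mul_right _)
      have := (Nat.ModEq.add_left k h0).trans (by rw [Nat.add_zero])
      exact this.trans hcast
    obtain ⟨j, hj⟩ : N ∣ M - c i := (Nat.modEq_iff_dvd' hciM).mp hMc.symm
    refine ⟨i, hi, j, (hgeq _ _).mpr ?_⟩
    have hMeq : c i + N * j = M := by omega
    rw [hMeq]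
    exact hMk

/-- The triple intersection number `T_{β,a}(D) = |D ∩ (D - β) ∩ (D - aβ)|`. -/
noncomputable def tripleInt {F : Type*} [Field F] (β a : F) (D : Set F) : ℕ :=
  Set.ncard {x : F | x ∈ D ∧ x + β ∈ D ∧ x + a * β ∈ D}

lemma tripleInt_mul_invariant {K : Type*} [Field K] {c : K} (hc : c ≠ 0) (β a : K)
    (D : Set K) (hD : ∀ x, x ∈ D ↔ c * x ∈ D) :
    tripleInt (c * β) a D = tripleInt β a D := by
  unfold tripleInt
  have himg : {x : K | x ∈ D ∧ x + c * β ∈ D ∧ x + a * (c * β) ∈ D}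
      = (fun y => c * y) '' {x : K | x ∈ D ∧ x + β ∈ D ∧ x + a * β ∈ D} := by
    ext x
    simp only [Set.mem_image, Set.mem_setOf_eq]
    constructor
    · rintro ⟨h1, h2, h3⟩
      refine ⟨c⁻¹ * x, ⟨?_, ?_, ?_⟩, by field_simp⟩
      · rw [hD]
        have : c * (c⁻¹ * x) = x := by field_simp
        rw [this]; exact h1
      · rw [hD]
        have : c * (c⁻¹ * x + β) = x + c * β := by field_simp
        rw [this]; exact h2
      · rw [hD]
        have : c * (c⁻¹ * x + a * β) = x + a * (c * β) := by field_simp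
        rw [this]; exact h3
    · rintro ⟨y, ⟨h1, h2, h3⟩, rfl⟩
      refine ⟨(hD y).mp h1, ?_, ?_⟩
      · rw [← mul_add]; exact (hD _).mp h2
      · have : c * y + a * (c * β) = c * (y + a * β) := by ring
        rw [this]; exact (hD _).mp h3
  rw [himg, Set.ncard_image_of_injective _ (mul_right_injective₀ hc)]

open Function MulAction in
lemma ncard_modEq_ncard_fixed {K : Type*} [Fintype K] {t : ℕ} (ht : t.Prime)
    (S : Set K) (φ : K → K) (hmaps : ∀ x ∈ S, φ x ∈ S)
    (hinj : Function.Injective φ) (hit : ∀ x, φ^[t] x = x) :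
    S.ncard ≡ {x : K | x ∈ S ∧ φ x = x}.ncard [MOD t] := by
  classical
  haveI : Fact t.Prime := ⟨ht⟩
  let f : S → S := fun x => ⟨φ x, hmaps x x.2⟩
  have hfinj : Function.Injective f := by
    intro a b hab
    exact Subtype.ext (hinj (congrArg Subtype.val hab))
  have hfbij : Function.Bijective f := Finite.injective_iff_bijective.mp hfinj
  let σ : Equiv.Perm S := Equiv.ofBijective f hfbij
  have hσ_apply : ∀ x, σ x = f x := fun x => rfl
  have hσpow : ∀ (j : ℕ) (x : S), (((σ ^ j) x : S) : K) = φ^[j] (x : K) := by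
    intro j
    induction j with
    | zero => intro x; simp
    | succ j ih =>
      intro x
      rw [pow_succ', Equiv.Perm.mul_apply, Function.iterate_succ_apply']
      rw [hσ_apply]
      show φ (((σ ^ j) x : S) : K) = _
      rw [ih]
  have hσt : σ ^ t = 1 := by
    ext x
    have := hσpow t x
    rw [hit] at this
    simp only [Equiv.Perm.coe_one, id_eq]
    exact congrArg Subtype.val (Subtype.ext this) ▸ this
  set H := Subgroup.zpowers σ with hH
  have hHp : IsPGroup t H := by
    intro g
    refine ⟨1, ?_⟩
    obtain ⟨z, hz⟩ := g.2
    have : (g : Equiv.Perm S) ^ (t ^ 1) = 1 := by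
      rw [← hz, pow_one, ← zpow_natCast, ← zpow_mul, mul_comm, zpow_mul, zpow_natCast, hσt,
        one_zpow]
    exact Subtype.ext (by push_cast; exact this)
  have hmod := hHp.card_modEq_card_fixedPoints S
  have hfixeq : fixedPoints H S = {x : S | φ (x : K) = (x : K)} := by
    ext x
    simp only [mem_fixedPoints, Set.mem_setOf_eq]
    constructor
    · intro h
      have := h ⟨σ, Subgroup.mem_zpowers σ⟩
      have hx : σ x = x := this
      have := congrArg Subtype.val hx
      rw [hσ_apply] at this
      exact this
    · intro h g
      obtain ⟨z, hz⟩ := g.2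
      have hfix : Function.IsFixedPt σ x := by
        apply Subtype.ext
        rw [hσ_apply]
        exact h
      have : (σ ^ z) x = x := Function.IsFixedPt.perm_zpow hfix z
      show (g : Equiv.Perm S) • x = x
      rw [← hz]
      exact this
  have h1 : Nat.card S = S.ncard := Nat.card_coe_set_eq S
  have h2 : Nat.card (fixedPoints H S) = {x : K | x ∈ S ∧ φ x = x}.ncard := by
    rw [hfixeq]
    rw [← Nat.card_coe_set_eq]
    apply Nat.card_congr
    exact (Equiv.subtypeSubtypeEquivSubtypeInter (fun x : K => x ∈ S) (fun x => φ x = x))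
  rw [h1, h2] at hmod
  exact hmod

/-- Theorem 3.1: Feng–Xiang setting; `t` an odd prime coprime to `p₁`, `γ` a primitive
element of `𝔽_{q^t}`, `ω = γ^{(q^t-1)/(q-1)}`, `D = ⋃_{i∈I} ω^i⟨ω^N⟩` the Feng–Xiang skew
Hadamard difference set with index set `I`, `D' = ⋃_{i∈I} γ^i⟨γ^N⟩` its lift to `𝔽_{q^t}`,
and `tinv` the inverse of `t` modulo `N`.  If `{T_{ω^ℓ,a}(D^{(t⁻¹)}) mod t : 0 ≤ ℓ ≤ N-1}`
has exactly `u` elements, then so does `{T_{γ^ℓ,a}(D') mod t : 0 ≤ ℓ ≤ N-1}`. -/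
theorem lift_tripleInt_mod_prime_extension_degree
    (p1 m N p f s q t tinv : ℕ)
    (hp1 : p1.Prime) (hp1mod : p1 % 8 = 7) (hm : 1 ≤ m) (hN : N = 2 * p1 ^ m)
    (hp : p.Prime) (hpmod : p % 4 = 3)
    (hf : f = N.totient / 2) (hord : orderOf (p : ZMod N) = f)
    (hs : Odd s) (hq : q = p ^ (f * s))
    (ht : t.Prime) (htodd : Odd t) (htp1 : Nat.Coprime t p1)
    (htinv : t * tinv ≡ 1 [MOD N])
    (I : Finset ℕ) (hIN : ∀ i ∈ I, i < N)
    (hIcov : ∀ r : ZMod (p1 ^ m), ∃ i ∈ I, (i : ZMod (p1 ^ m)) = r)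
    (K : Type*) [Field K] [Fintype K] (hK : Fintype.card K = q ^ t)
    (γ : K) (hγ : orderOf γ = q ^ t - 1)
    (ω : K) (hω : ω = γ ^ ((q ^ t - 1) / (q - 1)))
    (Dt : Set K) (hDt : Dt = {x : K | ∃ i ∈ I, ∃ j : ℕ, x = ω ^ (tinv * i + N * j)})
    (D' : Set K) (hD' : D' = {x : K | ∃ i ∈ I, ∃ j : ℕ, x = γ ^ (i + N * j)})
    (a : K) (ha0 : a ≠ 0) (ha1 : a ≠ 1) (hap : a ^ p = a)
    (u : ℕ)
    (hu : ((Finset.range N).image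
        (fun ℓ => ((tripleInt (ω ^ ℓ) a Dt : ℕ) : ZMod t))).card = u) :
    ((Finset.range N).image
        (fun ℓ => ((tripleInt (γ ^ ℓ) a D' : ℕ) : ZMod t))).card = u := by
  classical
  haveI : Fact p.Prime := ⟨hp⟩
  -- basic arithmetic facts
  have hp17 : 7 ≤ p1 := by omega
  have hp1m : 7 ≤ p1 ^ m := by
    calc 7 ≤ p1 := hp17
    _ = p1 ^ 1 := (pow_one p1).symm
    _ ≤ p1 ^ m := Nat.pow_le_pow_right (by omega) hm
  have h2N : 2 ≤ N := by omega
  have hfs1 : 1 ≤ f * s := by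
    have hs1 : 1 ≤ s := hs.pos
    have htot : 2 ≤ N.totient := by
      have h1 : 0 < N.totient := Nat.totient_pos.mpr (by omega : 0 < N)
      have h2 : Even N.totient := Nat.totient_even (by omega : 2 < N)
      obtain ⟨w, hw⟩ := h2
      omega
    have hf1 : 1 ≤ f := by omega
    exact Nat.one_le_iff_ne_zero.mpr (Nat.mul_ne_zero (by omega) (by omega))
  have hq2 : 2 ≤ q := by
    calc 2 ≤ p := hp.two_le
    _ = p ^ 1 := (pow_one p).symm
    _ ≤ p ^ (f * s) := Nat.pow_le_pow_right (by omega) hfs1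
    _ = q := hq.symm
  have hqt2 : 2 ≤ q ^ t := by
    calc 2 ≤ q := hq2
    _ = q ^ 1 := (pow_one q).symm
    _ ≤ q ^ t := Nat.pow_le_pow_right (by omega) ht.one_lt.le
  set n := q ^ t - 1 with hn
  have hn1 : 1 ≤ n := by omega
  -- characteristic
  haveI hcharK : CharP K p := by
    have hcard : Fintype.card K = p ^ (f * s * t) := by
      rw [hK, hq, ← pow_mul]
    haveI := ringChar.charP K
    have hrprime : (ringChar K).Prime := CharP.char_is_prime K (ringChar K)
    obtain ⟨nn, hnp, hcard2⟩ := FiniteField.card K (ringChar K)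
    have hdvd : p ∣ ringChar K ^ (nn : ℕ) := by
      rw [← hcard2, hcard]
      exact dvd_pow_self p (by have := Nat.mul_le_mul hfs1 ht.pos; omega)
    have : p = ringChar K := by
      have := hp.dvd_of_dvd_pow hdvd
      exact (Nat.prime_dvd_prime_iff_eq hp hrprime).mp this
    rw [this]
    exact ringChar.charP K
  haveI : Fact t.Prime := ⟨ht⟩
  have hγ0 : γ ≠ 0 := by
    intro h
    have h1 := pow_orderOf_eq_one γ
    rw [hγ, h] at h1
    rw [zero_pow (by omega : q ^ t - 1 ≠ 0)] at h1
    exact zero_ne_one h1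
  have hω0 : ω ≠ 0 := by rw [hω]; exact pow_ne_zero _ hγ0
  have hgeqγ : ∀ k k' : ℕ, γ ^ k = γ ^ k' ↔ k ≡ k' [MOD n] := by
    intro k k'; rw [field_pow_eq_pow_iff hγ0, hγ]
  have hγn : γ ^ n = 1 := by
    have := (hgeqγ n 0).mpr (by simp [Nat.ModEq])
    simpa using this
  -- geometric sum
  set E := ∑ i ∈ Finset.range t, q ^ i with hE
  have hE1 : 1 ≤ E := by
    rw [hE]
    calc 1 = q ^ 0 := (pow_zero q).symm
    _ ≤ ∑ i ∈ Finset.range t, q ^ i :=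
        Finset.single_le_sum (fun i _ => Nat.zero_le _) (Finset.mem_range.mpr ht.pos)
  have hEq : E * (q - 1) = n := by
    have hz : (E : ℤ) * ((q : ℤ) - 1) = (q : ℤ) ^ t - 1 := by
      rw [hE]
      push_cast
      exact geom_sum_mul (q : ℤ) t
    have h1 : ((q - 1 : ℕ) : ℤ) = (q : ℤ) - 1 := by
      push_cast [Nat.cast_sub (by omega : 1 ≤ q)]; ring
    have h2 : ((n : ℕ) : ℤ) = (q : ℤ) ^ t - 1 := by
      rw [hn]
      push_cast [Nat.cast_sub (by omega : 1 ≤ q ^ t)]; ring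
    have : ((E * (q - 1) : ℕ) : ℤ) = ((n : ℕ) : ℤ) := by
      rw [Nat.cast_mul, h1, h2]
      exact hz
    exact_mod_cast this
  have hdivE : (q ^ t - 1) / (q - 1) = E := by
    rw [← hn]
    exact Nat.div_eq_of_eq_mul_left (by omega : 0 < q - 1) hEq.symm
  rw [hdivE] at hω
  -- q ≡ 1 mod N
  have hpf : (p : ZMod N) ^ f = 1 := by rw [← hord]; exact pow_orderOf_eq_one _
  have hqN : (q : ZMod N) = 1 := by
    rw [hq]; push_cast; rw [pow_mul, hpf, one_pow]
  have hNdvd : ∀ k : ℕ, 1 ≤ k → (q ^ k - 1 : ℕ) ≡ 0 [MOD N] := by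
    intro k hk
    apply Nat.modEq_zero_iff_dvd.mpr
    apply (ZMod.natCast_eq_zero_iff _ _).mp
    have h1 : 1 ≤ q ^ k := Nat.one_le_pow _ _ (by omega)
    push_cast [Nat.cast_sub h1]
    rw [hqN, one_pow]
    ring
  have hNq1 : N ∣ q - 1 := by
    have := hNdvd 1 le_rfl
    rw [pow_one] at this
    exact Nat.modEq_zero_iff_dvd.mp this
  have hNn : N ∣ n := by
    have := hNdvd t ht.pos
    rw [← hn] at this
    exact Nat.modEq_zero_iff_dvd.mp this
  have hEN : (E : ZMod N) = (t : ZMod N) := by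
    rw [hE]
    push_cast
    rw [Finset.sum_congr rfl (fun i _ => by rw [hqN, one_pow])]
    simp
  have hq11 : 1 ≤ q - 1 := by omega
  have hgeqω : ∀ k k' : ℕ, ω ^ k = ω ^ k' ↔ k ≡ k' [MOD q - 1] := by
    intro k k'
    rw [hω, ← pow_mul, ← pow_mul, hgeqγ]
    constructor
    · intro h
      have h2 : E * k ≡ E * k' [MOD E * (q - 1)] := by rwa [hEq]
      exact Nat.ModEq.mul_left_cancel' (by omega : E ≠ 0) h2
    · intro h
      have h2 := h.mul_left' E
      rwa [hEq] at h2
  have hωq1 : ω ^ (q - 1) = 1 := by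
    have := (hgeqω (q - 1) 0).mpr (by simp [Nat.ModEq])
    simpa using this
  have hωpowq : ∀ j : ℕ, (ω ^ j) ^ q = ω ^ j := by
    intro j
    rw [← pow_mul]
    apply (hgeqω (j * q) j).mpr
    have h1 : q ≡ 1 [MOD q - 1] := ((Nat.modEq_iff_dvd' (by omega)).mpr dvd_rfl).symm
    have := h1.mul_left j
    simpa using this
  have haq : a ^ q = a := by
    rw [hq]
    have : ∀ jj : ℕ, a ^ p ^ jj = a := by
      intro jj
      induction jj with
      | zero => simp
      | succ j ih => rw [pow_succ, pow_mul, ih, hap]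
    exact this _
  -- membership characterizations
  have hmemD' : ∀ k : ℕ, (γ ^ k ∈ D') ↔ ∃ i ∈ I, (k : ZMod N) = (i : ZMod N) := by
    intro k
    rw [hD']
    exact pow_mem_iff hgeqγ hn1 hNn I (fun i => i) k
  have hmemDt : ∀ k : ℕ, (ω ^ k ∈ Dt) ↔ ∃ i ∈ I, (k : ZMod N) = ((tinv * i : ℕ) : ZMod N) := by
    intro k
    rw [hDt]
    exact pow_mem_iff hgeqω hq11 hNq1 I (fun i => tinv * i) k
  have hD'0 : (0 : K) ∉ D' := by
    rw [hD']
    rintro ⟨i, hi, j, hj⟩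
    exact (pow_ne_zero _ hγ0) hj.symm
  have hDt0 : (0 : K) ∉ Dt := by
    rw [hDt]
    rintro ⟨i, hi, j, hj⟩
    exact (pow_ne_zero _ hω0) hj.symm
  -- surjectivity onto powers of γ
  have hsurj : ∀ y : K, y ≠ 0 → ∃ k : ℕ, y = γ ^ k := by
    intro y hy
    set γu : Kˣ := Units.mk0 γ hγ0 with hγu
    have hou : orderOf γu = n := by rw [← hγ, ← orderOf_units]; rfl
    have hcardu : Nat.card Kˣ = n := by
      rw [Nat.card_eq_fintype_card, Fintype.card_units, hK]
    have htop : Subgroup.zpowers γu = ⊤ := by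
      apply Subgroup.eq_top_of_card_eq
      rw [Nat.card_zpowers, hou, hcardu]
    have hmem : Units.mk0 y hy ∈ Subgroup.zpowers γu := by rw [htop]; trivial
    obtain ⟨k, hk⟩ := (mem_powers_iff_mem_zpowers).mpr hmem
    refine ⟨k, ?_⟩
    have := congrArg Units.val hk
    rw [Units.val_pow_eq_pow_val] at this
    simpa [hγu] using this.symm
  -- closure under multiplication by γ^(N r), ω^(N r)
  have hclD'half : ∀ (r : ℕ) (x : K), x ∈ D' → γ ^ (N * r) * x ∈ D' := by
    intro r x hx
    rw [hD'] at hx ⊢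
    obtain ⟨i, hi, j, rfl⟩ := hx
    refine ⟨i, hi, j + r, ?_⟩
    rw [← pow_add]
    congr 1
    ring
  have hclD' : ∀ (r : ℕ) (x : K), x ∈ D' ↔ γ ^ (N * r) * x ∈ D' := by
    intro r x
    constructor
    · exact hclD'half r x
    · intro h
      have h2 := hclD'half (r * (n - 1)) _ h
      have hone : γ ^ (N * (r * (n - 1))) * γ ^ (N * r) = 1 := by
        rw [← pow_add]
        have hexp : N * (r * (n - 1)) + N * r = N * r * n := by
          have h := mul_pred_add (N * r) n hn1
          calc N * (r * (n - 1)) + N * r = N * r * (n - 1) + N * r := by ring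
          _ = N * r * n := h
        rw [hexp, mul_comm (N * r) n, pow_mul, hγn, one_pow]
      rwa [← mul_assoc, hone, one_mul] at h2
  have hclDthalf : ∀ (r : ℕ) (x : K), x ∈ Dt → ω ^ (N * r) * x ∈ Dt := by
    intro r x hx
    rw [hDt] at hx ⊢
    obtain ⟨i, hi, j, rfl⟩ := hx
    refine ⟨i, hi, j + r, ?_⟩
    rw [← pow_add]
    congr 1
    ring
  have hclDt : ∀ (r : ℕ) (x : K), x ∈ Dt ↔ ω ^ (N * r) * x ∈ Dt := by
    intro r x
    constructor
    · exact hclDthalf r x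
    · intro h
      have h2 := hclDthalf (r * ((q - 1) - 1)) _ h
      have hone : ω ^ (N * (r * ((q - 1) - 1))) * ω ^ (N * r) = 1 := by
        rw [← pow_add]
        have hexp : N * (r * ((q - 1) - 1)) + N * r = N * r * (q - 1) := by
          have h := mul_pred_add (N * r) (q - 1) hq11
          calc N * (r * ((q - 1) - 1)) + N * r = N * r * ((q - 1) - 1) + N * r := by ring
          _ = N * r * (q - 1) := h
        rw [hexp, mul_comm (N * r) (q - 1), pow_mul, hωq1, one_pow]
      rwa [← mul_assoc, hone, one_mul] at h2
  -- tripleInt over Dt only depends on the exponent mod N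
  have hFmod : ∀ ℓ₁ ℓ₂ : ℕ, ℓ₁ ≡ ℓ₂ [MOD N] →
      tripleInt (ω ^ ℓ₁) a Dt = tripleInt (ω ^ ℓ₂) a Dt := by
    have hstep : ∀ ℓ₁ : ℕ, tripleInt (ω ^ ℓ₁) a Dt = tripleInt (ω ^ (ℓ₁ % N)) a Dt := by
      intro ℓ₁
      conv_lhs => rw [show ℓ₁ = N * (ℓ₁ / N) + ℓ₁ % N from (Nat.div_add_mod _ _).symm]
      rw [pow_add]
      exact tripleInt_mul_invariant (pow_ne_zero _ hω0) _ a Dt (hclDt (ℓ₁ / N))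
    intro ℓ₁ ℓ₂ h12
    rw [hstep ℓ₁, hstep ℓ₂, h12]
  -- Frobenius facts
  have hfrob : ∀ x y : K, (x + y) ^ q = x ^ q + y ^ q := by
    intro x y
    rw [hq]
    exact add_pow_char_pow x y p (f * s)
  have hqinj : ∀ x y : K, x ^ q = y ^ q → x = y := by
    intro x y h
    have h1 : (x - y) ^ q = 0 := by
      rw [hq, sub_pow_char_pow, ← hq, h, sub_self]
    have h2 := pow_eq_zero_iff (by omega : q ≠ 0) |>.mp h1
    exact sub_eq_zero.mp h2
  -- THE KEY CONGRUENCE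
  have hkey : ∀ ℓ : ℕ, ((tripleInt (γ ^ ℓ) a D' : ℕ) : ZMod t)
      = ((tripleInt (ω ^ (tinv * ℓ)) a Dt : ℕ) : ZMod t) := by
    intro ℓ
    set β := γ ^ ℓ with hβ
    set S := {x : K | x ∈ D' ∧ x + β ∈ D' ∧ x + a * β ∈ D'} with hS
    have hTS : tripleInt β a D' = S.ncard := rfl
    set cγ := γ ^ (ℓ * (q - 1) * (n - 1)) with hcγdef
    have hcγ : γ ^ (ℓ * (q - 1)) * cγ = 1 := by
      rw [hcγdef, ← pow_add]
      have hexp : ℓ * (q - 1) + ℓ * (q - 1) * (n - 1) = n * (ℓ * (q - 1)) := by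
        have h := mul_pred_add (ℓ * (q - 1)) n hn1
        calc ℓ * (q - 1) + ℓ * (q - 1) * (n - 1)
            = ℓ * (q - 1) * (n - 1) + ℓ * (q - 1) := by ring
        _ = ℓ * (q - 1) * n := h
        _ = n * (ℓ * (q - 1)) := by ring
      rw [hexp, pow_mul, hγn, one_pow]
    set φfn : K → K := fun x => cγ * x ^ q with hφdef
    have hcγ0 : cγ ≠ 0 := pow_ne_zero _ hγ0
    have hφinj : Function.Injective φfn := by
      intro x y h
      simp only [hφdef] at h
      exact hqinj x y (mul_left_cancel₀ hcγ0 h)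
    have hmemfix : ∀ x : K, (φfn x = x ↔ x ^ q = γ ^ (ℓ * (q - 1)) * x) := by
      intro x
      constructor
      · intro h
        calc x ^ q = (γ ^ (ℓ * (q - 1)) * cγ) * x ^ q := by rw [hcγ, one_mul]
        _ = γ ^ (ℓ * (q - 1)) * (cγ * x ^ q) := by ring
        _ = γ ^ (ℓ * (q - 1)) * x := by rw [show cγ * x ^ q = x from h]
      · intro h
        show cγ * x ^ q = x
        rw [h]
        calc cγ * (γ ^ (ℓ * (q - 1)) * x) = (γ ^ (ℓ * (q - 1)) * cγ) * x := by ring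
        _ = x := by rw [hcγ, one_mul]
    have hβq : β ^ q = γ ^ (ℓ * (q - 1)) * β := by
      rw [hβ, ← pow_mul, ← pow_add]
      congr 1
      have := mul_pred_add ℓ q (by omega : 1 ≤ q)
      omega
    have hcγβ : cγ * β ^ q = β := by
      rw [hβq]
      calc cγ * (γ ^ (ℓ * (q - 1)) * β) = (γ ^ (ℓ * (q - 1)) * cγ) * β := by ring
      _ = β := by rw [hcγ, one_mul]
    -- φ maps D' to D'
    have hD'q : ∀ x : K, x ∈ D' → x ^ q ∈ D' := by
      intro x hx
      have hx' := hx
      rw [hD'] at hx'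
      obtain ⟨i, hi, j, rfl⟩ := hx'
      rw [← pow_mul]
      apply (hmemD' _).mpr
      refine ⟨i, hi, ?_⟩
      push_cast
      rw [hqN]
      simp [ZMod.natCast_self]
    have hcγD' : ∀ x : K, x ∈ D' → cγ * x ∈ D' := by
      obtain ⟨r, hr⟩ : N ∣ ℓ * (q - 1) * (n - 1) := ((hNq1.mul_left ℓ).mul_right (n - 1))
      intro x hx
      rw [hcγdef, hr]
      exact hclD'half r x hx
    have hmapsS : ∀ x ∈ S, φfn x ∈ S := by
      rintro x ⟨h1, h2, h3⟩
      have e2 : φfn x + β = φfn (x + β) := by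
        show cγ * x ^ q + β = cγ * (x + β) ^ q
        rw [hfrob, mul_add, hcγβ]
      have e3 : φfn x + a * β = φfn (x + a * β) := by
        show cγ * x ^ q + a * β = cγ * (x + a * β) ^ q
        rw [hfrob, mul_add, mul_pow, haq, show cγ * (a * β ^ q) = a * (cγ * β ^ q) from by ring,
          hcγβ]
      refine ⟨hcγD' _ (hD'q _ h1), ?_, ?_⟩
      · rw [e2]; exact hcγD' _ (hD'q _ h2)
      · rw [e3]; exact hcγD' _ (hD'q _ h3)
    have hiter : ∀ x : K, φfn^[t] x = x := by
      have hj : ∀ (j : ℕ) (x : K), φfn^[j] x = cγ ^ (∑ i ∈ Finset.range j, q ^ i) * x ^ q ^ j := by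
        intro j
        induction j with
        | zero => intro x; simp
        | succ j ih =>
          intro x
          rw [Function.iterate_succ_apply', ih]
          show cγ * (cγ ^ (∑ i ∈ Finset.range j, q ^ i) * x ^ q ^ j) ^ q = _
          rw [mul_pow, ← pow_mul, ← pow_mul]
          have hexp1 : (∑ i ∈ Finset.range j, q ^ i) * q = ∑ i ∈ Finset.range j, q ^ (i + 1) := by
            rw [Finset.sum_mul]
            exact Finset.sum_congr rfl (fun i _ => by rw [pow_succ])
          have hexp2 : (∑ i ∈ Finset.range (j + 1), q ^ i)
              = (∑ i ∈ Finset.range j, q ^ (i + 1)) + 1 := by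
            rw [Finset.sum_range_succ']
            simp
          rw [hexp1, hexp2, pow_add, pow_one, pow_succ, pow_mul]
          ring
      intro x
      rw [hj t x]
      have hxqt : x ^ q ^ t = x := by rw [← hK]; exact FiniteField.pow_card x
      rw [hxqt, ← hE]
      have hcE : cγ ^ E = 1 := by
        rw [hcγdef, ← pow_mul]
        have hexp : ℓ * (q - 1) * (n - 1) * E = n * (ℓ * (n - 1)) := by
          calc ℓ * (q - 1) * (n - 1) * E = (E * (q - 1)) * (ℓ * (n - 1)) := by ring
          _ = n * (ℓ * (n - 1)) := by rw [hEq]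
        rw [hexp, pow_mul, hγn, one_pow]
      rw [hcE, one_mul]
    -- counting: |S| ≡ |Fix| mod t
    have hcount := ncard_modEq_ncard_fixed ht S φfn hmapsS hφinj hiter
    set Fix := {x : K | x ∈ S ∧ φfn x = x} with hFix
    -- the target set over Dt
    set ℓ' := tinv * ℓ with hℓ'
    set S' := {x : K | x ∈ Dt ∧ x + ω ^ ℓ' ∈ Dt ∧ x + a * ω ^ ℓ' ∈ Dt} with hS'
    have hTS' : tripleInt (ω ^ ℓ') a Dt = S'.ncard := rfl
    set c0 := ω ^ ℓ' * γ ^ (ℓ * (n - 1)) with hc0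
    have hγℓn : γ ^ (ℓ * (n - 1)) * γ ^ ℓ = 1 := by
      rw [← pow_add]
      have hexp : ℓ * (n - 1) + ℓ = ℓ * n := mul_pred_add ℓ n hn1
      rw [hexp, mul_comm ℓ n, pow_mul, hγn, one_pow]
    have hc0β : c0 * β = ω ^ ℓ' := by
      rw [hc0, hβ, mul_assoc, hγℓn, mul_one]
    have hc0ne : c0 ≠ 0 := mul_ne_zero (pow_ne_zero _ hω0) (pow_ne_zero _ hγ0)
    have hTinv : (tinv : ZMod N) * (t : ZMod N) = 1 := by
      have := (ZMod.natCast_eq_natCast_iff _ _ _).mpr htinv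
      push_cast at this
      rw [mul_comm]
      exact this
    -- Lemma B
    have hLB : ∀ y : K, y ^ q = γ ^ (ℓ * (q - 1)) * y → (y ∈ D' ↔ c0 * y ∈ Dt) := by
      intro y hy
      by_cases hy0 : y = 0
      · subst hy0
        rw [mul_zero]
        exact ⟨fun h => absurd h hD'0, fun h => absurd h hDt0⟩
      · obtain ⟨k, rfl⟩ := hsurj y hy0
        have h1 : k * q ≡ ℓ * (q - 1) + k [MOD n] := by
          apply (hgeqγ _ _).mp
          rw [pow_mul, pow_add]
          exact hy
        have h2 : k * (q - 1) + k ≡ ℓ * (q - 1) + k [MOD n] := by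
          have hqq : k * (q - 1) + k = k * q := mul_pred_add k q (by omega)
          rwa [hqq]
        have h3 : k * (q - 1) ≡ ℓ * (q - 1) [MOD n] := Nat.ModEq.add_right_cancel' k h2
        have h4 : k ≡ ℓ [MOD E] := by
          rw [← hEq] at h3
          exact Nat.ModEq.mul_right_cancel' (by omega : q - 1 ≠ 0) h3
        set k' := k + n * (ℓ + 1) with hk'
        have hγk : (γ : K) ^ k = γ ^ k' := by
          apply (hgeqγ _ _).mpr
          simp [hk', Nat.ModEq, Nat.add_mul_mod_self_left]
        have hk'ℓ : ℓ ≤ k' := by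
          have h5 : ℓ + 1 ≤ n * (ℓ + 1) := Nat.le_mul_of_pos_left _ (by omega)
          omega
        have hEn : E ∣ n := Dvd.intro _ hEq
        have hk'mod : k' ≡ ℓ [MOD E] := by
          have h6 : n * (ℓ + 1) ≡ 0 [MOD E] := Nat.modEq_zero_iff_dvd.mpr (hEn.mul_right _)
          have h7 : k' ≡ k + 0 [MOD E] := Nat.ModEq.add_left k h6
          rw [Nat.add_zero] at h7
          exact h7.trans h4
        obtain ⟨r, hr⟩ : ∃ r : ℕ, k' = ℓ + E * r := by
          obtain ⟨r, hrr⟩ := (Nat.modEq_iff_dvd' hk'ℓ).mp hk'mod.symm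
          exact ⟨r, by omega⟩
        have hc0y : c0 * γ ^ k = ω ^ (ℓ' + r) := by
          rw [hγk, hr, hc0]
          calc ω ^ ℓ' * γ ^ (ℓ * (n - 1)) * γ ^ (ℓ + E * r)
              = ω ^ ℓ' * (γ ^ E) ^ r * (γ ^ (ℓ * (n - 1)) * γ ^ ℓ) := by
                rw [pow_add, ← pow_mul, mul_comm E r, pow_mul]
                ring
          _ = ω ^ ℓ' * ω ^ r := by rw [hγℓn, ← hω, mul_one]
          _ = ω ^ (ℓ' + r) := by rw [pow_add]
        rw [hc0y, hγk, hr, hmemD' (ℓ + E * r), hmemDt (ℓ' + r)]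
        constructor
        · rintro ⟨i, hi, hcast⟩
          refine ⟨i, hi, ?_⟩
          push_cast at hcast ⊢
          rw [hEN] at hcast
          rw [hℓ']
          push_cast
          linear_combination (tinv : ZMod N) * hcast - (r : ZMod N) * hTinv
        · rintro ⟨i, hi, hcast⟩
          refine ⟨i, hi, ?_⟩
          push_cast [hℓ'] at hcast
          push_cast [hEN]
          linear_combination (t : ZMod N) * hcast - ((ℓ : ZMod N) - (i : ZMod N)) * hTinv
    -- fixed set maps onto S'
    have hfixim : S' = (fun x => c0 * x) '' Fix := by
      ext w
      simp only [hS', hFix, hS, Set.mem_image, Set.mem_setOf_eq]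
      constructor
      · rintro ⟨hw1, hw2, hw3⟩
        set x := γ ^ ℓ * (ω ^ ℓ')⁻¹ * w with hx
        have hc0x : c0 * x = w := by
          rw [hc0, hx]
          have hωinv : ω ^ ℓ' * (ω ^ ℓ')⁻¹ = 1 := mul_inv_cancel₀ (pow_ne_zero _ hω0)
          calc ω ^ ℓ' * γ ^ (ℓ * (n - 1)) * (γ ^ ℓ * (ω ^ ℓ')⁻¹ * w)
              = (γ ^ (ℓ * (n - 1)) * γ ^ ℓ) * (ω ^ ℓ' * (ω ^ ℓ')⁻¹) * w := by ring
          _ = w := by rw [hγℓn, hωinv, one_mul, one_mul]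
        have hwq : w ^ q = w := by
          rw [hDt] at hw1
          obtain ⟨i, hi, j, rfl⟩ := hw1
          exact hωpowq _
        have hγℓq : (γ ^ ℓ) ^ q = γ ^ (ℓ * (q - 1)) * γ ^ ℓ := by
          rw [← pow_mul, ← pow_add]
          congr 1
          have := mul_pred_add ℓ q (by omega : 1 ≤ q)
          omega
        have hωinvq : ((ω ^ ℓ')⁻¹) ^ q = (ω ^ ℓ')⁻¹ := by
          rw [inv_pow, hωpowq]
        have hxfix : x ^ q = γ ^ (ℓ * (q - 1)) * x := by
          rw [hx]
          calc (γ ^ ℓ * (ω ^ ℓ')⁻¹ * w) ^ q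
              = (γ ^ ℓ) ^ q * ((ω ^ ℓ')⁻¹) ^ q * w ^ q := by rw [mul_pow, mul_pow]
          _ = (γ ^ (ℓ * (q - 1)) * γ ^ ℓ) * (ω ^ ℓ')⁻¹ * w := by rw [hγℓq, hωinvq, hwq]
          _ = γ ^ (ℓ * (q - 1)) * (γ ^ ℓ * (ω ^ ℓ')⁻¹ * w) := by ring
        have hβfix : (x + β) ^ q = γ ^ (ℓ * (q - 1)) * (x + β) := by
          rw [hfrob, hxfix, hβq, mul_add]
        have haβfix : (x + a * β) ^ q = γ ^ (ℓ * (q - 1)) * (x + a * β) := by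
          rw [hfrob, hxfix, mul_pow, haq, hβq, mul_add]
          ring
        refine ⟨x, ⟨⟨?_, ?_, ?_⟩, (hmemfix x).mpr hxfix⟩, hc0x⟩
        · exact (hLB x hxfix).mpr (by rw [hc0x]; exact hw1)
        · apply (hLB _ hβfix).mpr
          rw [mul_add, hc0x, hc0β]
          exact hw2
        · apply (hLB _ haβfix).mpr
          rw [mul_add, hc0x, show c0 * (a * β) = a * (c0 * β) from by ring, hc0β]
          exact hw3
      · rintro ⟨x, ⟨⟨h1, h2, h3⟩, hfix⟩, rfl⟩
        have hxfix := (hmemfix x).mp hfix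
        have hβfix : (x + β) ^ q = γ ^ (ℓ * (q - 1)) * (x + β) := by
          rw [hfrob, hxfix, hβq, mul_add]
        have haβfix : (x + a * β) ^ q = γ ^ (ℓ * (q - 1)) * (x + a * β) := by
          rw [hfrob, hxfix, mul_pow, haq, hβq, mul_add]
          ring
        refine ⟨(hLB x hxfix).mp h1, ?_, ?_⟩
        · have := (hLB _ hβfix).mp h2
          rwa [mul_add, hc0β] at this
        · have := (hLB _ haβfix).mp h3
          rwa [mul_add, show c0 * (a * β) = a * (c0 * β) from by ring, hc0β] at this
    have hcard2 : S'.ncard = Fix.ncard := by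
      rw [hfixim]
      exact Set.ncard_image_of_injective _ (mul_right_injective₀ hc0ne)
    rw [hTS, hTS', hcard2]
    exact (ZMod.natCast_eq_natCast_iff _ _ _).mpr hcount
  -- conclude : the two images coincide
  have himg : ((Finset.range N).image (fun ℓ => ((tripleInt (γ ^ ℓ) a D' : ℕ) : ZMod t)))
      = ((Finset.range N).image (fun ℓ => ((tripleInt (ω ^ ℓ) a Dt : ℕ) : ZMod t))) := by
    apply Finset.ext
    intro v
    simp only [Finset.mem_image, Finset.mem_range]
    constructor
    · rintro ⟨ℓ, hℓ, rfl⟩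
      refine ⟨(tinv * ℓ) % N, Nat.mod_lt _ (by omega), ?_⟩
      rw [hFmod ((tinv * ℓ) % N) (tinv * ℓ) (Nat.mod_modEq _ _)]
      exact (hkey ℓ).symm
    · rintro ⟨ℓ, hℓ, rfl⟩
      refine ⟨(t * ℓ) % N, Nat.mod_lt _ (by omega), ?_⟩
      rw [hkey ((t * ℓ) % N)]
      congr 1
      apply hFmod
      calc tinv * ((t * ℓ) % N) ≡ tinv * (t * ℓ) [MOD N] :=
            Nat.ModEq.mul_left _ (Nat.mod_modEq _ _)
      _ = t * tinv * ℓ := by ring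
      _ ≡ 1 * ℓ [MOD N] := Nat.ModEq.mul_right ℓ htinv
      _ = ℓ := one_mul ℓ
  rw [himg]
  exact hu
end

section
/- Let p be an odd prime, q = p^f, and let D1, D2 ⊆ F_q be skew Hadamard difference sets in (F_q,+) that are equivalent, i.e., σ(D1) + x = D2 for some automorphism σ of the group (F_q,+) and some x ∈ F_q. Then for every a ∈ F_p^* \ {1}, the sets of triple intersection numbers coincide: {T_{β,a}(D1) : β ∈ F_q^*} = {T_{β,a}(D2) : β ∈ F_q^*}. -/
/-- `D` is a (skew Hadamard) difference set in the additive group `G`. -/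
def IsSkewHadamardDiffSet {G : Type*} [AddCommGroup G] (D : Set G) : Prop :=
  (∃ lam : ℕ, ∀ g : G, g ≠ 0 →
      Set.ncard {xy : G × G | xy.1 ∈ D ∧ xy.2 ∈ D ∧ xy.1 - xy.2 = g} = lam) ∧
    (0 : G) ∉ D ∧ ∀ x : G, x ≠ 0 → (x ∈ D ↔ -x ∉ D)

lemma cast_of_pow_char (F : Type*) [Field F] [Fintype F] (p : ℕ) (hp : p.Prime)
    [CharP F p] (a : F) (hap : a ^ p = a) : ∃ k : ℕ, a = (k : F) := by
  classical
  haveI : Fact p.Prime := ⟨hp⟩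
  set P : Polynomial F := Polynomial.X ^ p - Polynomial.X with hP
  have hdeg : P.natDegree = p := by
    rw [hP, Polynomial.natDegree_sub_eq_left_of_natDegree_lt]
    · exact Polynomial.natDegree_X_pow p
    · rw [Polynomial.natDegree_X, Polynomial.natDegree_X_pow]; exact hp.one_lt
  have hPne : P ≠ 0 := by
    intro h
    rw [h, Polynomial.natDegree_zero] at hdeg
    exact hp.ne_zero hdeg.symm
  let g : ZMod p →+* F := ZMod.castHom dvd_rfl F
  have hginj : Function.Injective g := g.injective
  have hroot : ∀ z : ZMod p, P.IsRoot (g z) := by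
    intro z
    simp only [hP, Polynomial.IsRoot, Polynomial.eval_sub, Polynomial.eval_pow,
      Polynomial.eval_X]
    rw [← map_pow, ZMod.pow_card, sub_self]
  have haroot : a ∈ P.roots.toFinset := by
    rw [Multiset.mem_toFinset, Polynomial.mem_roots hPne]
    simp only [hP, Polynomial.IsRoot, Polynomial.eval_sub, Polynomial.eval_pow,
      Polynomial.eval_X]
    rw [hap, sub_self]
  have hsub : Finset.univ.image g ⊆ P.roots.toFinset := by
    intro y hy
    obtain ⟨z, _, rfl⟩ := Finset.mem_image.mp hy
    rw [Multiset.mem_toFinset, Polynomial.mem_roots hPne]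
    exact hroot z
  have hcard : P.roots.toFinset.card ≤ (Finset.univ.image g).card := by
    calc P.roots.toFinset.card ≤ Multiset.card P.roots := Multiset.toFinset_card_le _
      _ ≤ P.natDegree := P.card_roots'
      _ = p := hdeg
      _ = (Finset.univ.image g).card := by
          rw [Finset.card_image_of_injective _ hginj, Finset.card_univ, ZMod.card]
  have himg : Finset.univ.image g = P.roots.toFinset :=
    Finset.eq_of_subset_of_card_le hsub hcard
  rw [← himg] at haroot
  obtain ⟨z, _, hz⟩ := Finset.mem_image.mp haroot
  refine ⟨z.val, ?_⟩
  have hzz : ((z.val : ℕ) : ZMod p) = z := ZMod.natCast_rightInverse z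
  rw [← hz]
  conv_lhs => rw [← hzz]
  exact map_natCast g z.val

lemma tripleInt_aux {F : Type*} [Field F] (σ : F ≃+ F) (x : F) (D : Set F) (a β : F)
    (hcom : σ (a * β) = a * σ β) :
    tripleInt (σ β) a ((fun y => σ y + x) '' D) = tripleInt β a D := by
  have hinj : Function.Injective (fun y : F => σ y + x) := by
    intro u v huv
    exact σ.injective (by simpa using huv)
  have hset : {z : F | z ∈ (fun y => σ y + x) '' D ∧ z + σ β ∈ (fun y => σ y + x) '' D ∧
      z + a * σ β ∈ (fun y => σ y + x) '' D} =
      (fun y => σ y + x) '' {y : F | y ∈ D ∧ y + β ∈ D ∧ y + a * β ∈ D} := by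
    ext z
    constructor
    · rintro ⟨⟨y, hy, rfl⟩, h2, h3⟩
      obtain ⟨w, hw, hwz⟩ := h2
      obtain ⟨v, hv, hvz⟩ := h3
      have hw' : w = y + β := by
        apply σ.injective
        have : σ w + x = σ y + x + σ β := hwz
        rw [map_add]; linear_combination this
      have hv' : v = y + a * β := by
        apply σ.injective
        have : σ v + x = σ y + x + a * σ β := hvz
        rw [map_add, hcom]; linear_combination this
      exact ⟨y, ⟨hy, hw' ▸ hw, hv' ▸ hv⟩, rfl⟩
    · rintro ⟨y, ⟨h1, h2, h3⟩, rfl⟩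
      refine ⟨⟨y, h1, rfl⟩, ⟨y + β, h2, ?_⟩, ⟨y + a * β, h3, ?_⟩⟩
      · simp only [map_add]; ring
      · simp only [map_add, hcom]; ring
  unfold tripleInt
  rw [hset, Set.ncard_image_of_injective _ hinj]

/-- Triple intersection numbers are an invariant for equivalence of skew Hadamard
difference sets: if `D₂ = σ(D₁) + x` for an automorphism `σ` of `(𝔽_q, +)` and `x ∈ 𝔽_q`,
then for every `a ∈ 𝔽_p^* \ {1}` the sets `{T_{β,a}(D₁) : β ≠ 0}` and
`{T_{β,a}(D₂) : β ≠ 0}` coincide. -/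
theorem tripleInt_invariant_of_equivalent
    (p f : ℕ) (hp : p.Prime) (hodd : Odd p)
    (F : Type*) [Field F] [Fintype F] (hF : Fintype.card F = p ^ f)
    (D1 D2 : Set F)
    (hD1 : IsSkewHadamardDiffSet D1) (hD2 : IsSkewHadamardDiffSet D2)
    (σ : F ≃+ F) (x : F) (heq : (fun y => σ y + x) '' D1 = D2)
    (a : F) (ha0 : a ≠ 0) (ha1 : a ≠ 1) (hap : a ^ p = a) :
    {n : ℕ | ∃ β : F, β ≠ 0 ∧ tripleInt β a D1 = n} =
      {n : ℕ | ∃ β : F, β ≠ 0 ∧ tripleInt β a D2 = n} := by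
  -- characteristic of F is p
  have hchar : CharP F (ringChar F) := ringChar.charP F
  have hprime : (ringChar F).Prime := CharP.char_is_prime F (ringChar F)
  have hdvd : ringChar F ∣ p ^ f := by
    rw [← hF]
    exact ringChar.dvd (Nat.cast_card_eq_zero F)
  have hrc : ringChar F = p :=
    (Nat.prime_dvd_prime_iff_eq hprime hp).mp (hprime.dvd_of_dvd_pow hdvd)
  haveI : CharP F p := hrc ▸ hchar
  -- a lies in the prime field, so σ commutes with multiplication by a
  obtain ⟨k, hk⟩ := cast_of_pow_char F p hp a hap
  have hcom : ∀ β : F, σ (a * β) = a * σ β := by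
    intro β
    rw [hk, ← nsmul_eq_mul, map_nsmul, nsmul_eq_mul]
  -- transfer
  ext n
  simp only [Set.mem_setOf_eq]
  constructor
  · rintro ⟨β, hβ, rfl⟩
    refine ⟨σ β, ?_, ?_⟩
    · intro h
      exact hβ (σ.injective (by simpa using h))
    · rw [← heq, tripleInt_aux σ x D1 a β (hcom β)]
  · rintro ⟨β, hβ, rfl⟩
    refine ⟨σ.symm β, ?_, ?_⟩
    · intro h
      apply hβ
      rw [← σ.apply_symm_apply β, h, map_zero]
    · have := tripleInt_aux σ x D1 a (σ.symm β) (hcom (σ.symm β))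
      rw [heq, σ.apply_symm_apply] at this
      exact this.symm
end

section
/- Let p be an odd prime, q = p^f ≡ 3 (mod 4), and a ∈ F_p^* \ {1}. If D' ⊆ F_q is a skew Hadamard difference set in (F_q,+) such that the set {T_{β,a}(D') : β ∈ F_q^*} contains at least 3 distinct values, then D' is not equivalent to the Paley difference set in F_q, i.e., there is no automorphism σ of (F_q,+) and x ∈ F_q with σ(D') + x equal to the set of nonzero squares of F_q. -/
/-- Multiplying by a nonzero square preserves membership in the Paley set. -/
lemma mem_paley_sq_mul {F : Type*} [Field F] {c : F} (hc : c ≠ 0) (t : F) :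
    (c ^ 2 * t ∈ {z : F | z ≠ 0 ∧ ∃ y : F, z = y ^ 2}) ↔
      t ∈ {z : F | z ≠ 0 ∧ ∃ y : F, z = y ^ 2} := by
  simp only [Set.mem_setOf_eq]
  constructor
  · rintro ⟨h0, y, hy⟩
    refine ⟨fun h => h0 (by rw [h, mul_zero]), y / c, ?_⟩
    have hc2 : (c : F) ^ 2 ≠ 0 := pow_ne_zero 2 hc
    field_simp
    rw [← hy]; ring
  · rintro ⟨h0, y, hy⟩
    exact ⟨mul_ne_zero (pow_ne_zero 2 hc) h0, c * y, by rw [hy]; ring⟩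

/-- Triple intersection numbers of the Paley set are invariant under scaling `β` by a
nonzero square. -/
lemma tripleInt_sq_mul {F : Type*} [Field F] (c β a : F) (hc : c ≠ 0) :
    tripleInt (c ^ 2 * β) a {z : F | z ≠ 0 ∧ ∃ y : F, z = y ^ 2}
      = tripleInt β a {z : F | z ≠ 0 ∧ ∃ y : F, z = y ^ 2} := by
  set P : Set F := {z : F | z ≠ 0 ∧ ∃ y : F, z = y ^ 2} with hP
  have key : ∀ t : F,
      (c ^ 2 * t ∈ P ∧ c ^ 2 * t + c ^ 2 * β ∈ P ∧ c ^ 2 * t + a * (c ^ 2 * β) ∈ P) ↔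
      (t ∈ P ∧ t + β ∈ P ∧ t + a * β ∈ P) := by
    intro t
    rw [show c ^ 2 * t + c ^ 2 * β = c ^ 2 * (t + β) by ring,
        show c ^ 2 * t + a * (c ^ 2 * β) = c ^ 2 * (t + a * β) by ring,
        mem_paley_sq_mul hc, mem_paley_sq_mul hc, mem_paley_sq_mul hc]
  have hc2 : (c : F) ^ 2 ≠ 0 := pow_ne_zero 2 hc
  have himg : {x : F | x ∈ P ∧ x + c ^ 2 * β ∈ P ∧ x + a * (c ^ 2 * β) ∈ P}
      = (fun t => c ^ 2 * t) '' {x : F | x ∈ P ∧ x + β ∈ P ∧ x + a * β ∈ P} := by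
    ext x
    constructor
    · intro hx
      refine ⟨x / c ^ 2, (key _).mp ?_, by field_simp⟩
      have hxx : c ^ 2 * (x / c ^ 2) = x := by field_simp
      rw [hxx]
      exact hx
    · rintro ⟨t, ht, rfl⟩
      exact (key t).mpr ht
  unfold tripleInt
  rw [himg, Set.ncard_image_of_injective _ (mul_right_injective₀ hc2)]

/-- Equivalence of difference sets transfers triple intersection numbers. -/
lemma tripleInt_transfer {F : Type*} [Field F] (σ : F ≃+ F) (x₀ β a : F)
    (D P : Set F) (himg : (fun y => σ y + x₀) '' D = P)
    (hcomm : ∀ y : F, σ (a * y) = a * σ y) :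
    tripleInt β a D = tripleInt (σ β) a P := by
  have hmem : ∀ y : F, y ∈ D ↔ σ y + x₀ ∈ P := by
    intro y
    rw [← himg]
    constructor
    · intro hy; exact ⟨y, hy, rfl⟩
    · rintro ⟨y', hy', he⟩
      have h1 : y' = y := σ.injective (by simpa using he)
      rwa [← h1]
  have e2 : ∀ y : F, σ (y + β) + x₀ = (σ y + x₀) + σ β := by
    intro y; rw [map_add]; ring
  have e3 : ∀ y : F, σ (y + a * β) + x₀ = (σ y + x₀) + a * σ β := by
    intro y; rw [map_add, hcomm]; ring
  have h2 : {z : F | z ∈ P ∧ z + σ β ∈ P ∧ z + a * σ β ∈ P}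
      = (fun y => σ y + x₀) '' {x : F | x ∈ D ∧ x + β ∈ D ∧ x + a * β ∈ D} := by
    ext z
    constructor
    · rintro ⟨h1, hz2, hz3⟩
      rw [← himg] at h1
      obtain ⟨y, hy, rfl⟩ := h1
      refine ⟨y, ⟨hy, ?_, ?_⟩, rfl⟩
      · rw [hmem, e2]; exact hz2
      · rw [hmem, e3]; exact hz3
    · rintro ⟨y, ⟨hy1, hy2, hy3⟩, rfl⟩
      refine ⟨(hmem y).mp hy1, ?_, ?_⟩
      · rw [← e2]; exact (hmem _).mp hy2
      · rw [← e3]; exact (hmem _).mp hy3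
  unfold tripleInt
  rw [h2, Set.ncard_image_of_injective]
  exact fun u v huv => σ.injective (add_right_cancel huv)

/-- Elements fixed by `x ↦ x ^ p` lie in the prime field (are natural casts). -/
lemma eq_natCast_of_pow_char {F : Type*} [Field F] (p : ℕ) [Fact p.Prime] [CharP F p]
    (a : F) (hap : a ^ p = a) : ∃ n : ℕ, a = (n : F) := by
  classical
  have hp1 : 1 < p := (Fact.out : p.Prime).one_lt
  set g : Polynomial F := Polynomial.X ^ p - Polynomial.X with hg
  have hg0 : g ≠ 0 := FiniteField.X_pow_card_sub_X_ne_zero F hp1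
  have hgdeg : g.natDegree = p := FiniteField.X_pow_card_sub_X_natDegree_eq F hp1
  have hroot : ∀ b : F, b ^ p = b → b ∈ g.roots := by
    intro b hb
    rw [Polynomial.mem_roots hg0]
    simp [hg, Polynomial.IsRoot, hb]
  by_contra hcon
  push_neg at hcon
  -- the casts of 0,...,p-1 together with a are p+1 distinct roots of g
  set S : Finset F := insert a ((Finset.range p).image (Nat.cast : ℕ → F)) with hS
  have hanotin : a ∉ (Finset.range p).image (Nat.cast : ℕ → F) := by
    intro hmem
    obtain ⟨n, _, hn⟩ := Finset.mem_image.mp hmem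
    exact hcon n hn.symm
  have hScard : S.card = p + 1 := by
    rw [hS, Finset.card_insert_of_notMem hanotin,
      Finset.card_image_of_injOn, Finset.card_range]
    intro x hx y hy hxy
    exact CharP.natCast_injOn_Iio F p (by simpa using Finset.mem_range.mp hx)
      (by simpa using Finset.mem_range.mp hy) hxy
  have hSsub : S.val ⊆ g.roots := by
    intro b hb
    have hb' : b ∈ S := hb
    rw [hS, Finset.mem_insert] at hb'
    rcases hb' with rfl | hb'
    · exact hroot _ hap
    · obtain ⟨n, _, rfl⟩ := Finset.mem_image.mp hb'
      refine hroot _ ?_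
      have h := map_natCast (frobenius F p) n
      rwa [frobenius_def] at h
  have hle : S.val ≤ g.roots := (Multiset.le_iff_subset S.nodup).mpr hSsub
  have hcard : S.card ≤ p := by
    have h1 := Multiset.card_le_card hle
    have h2 := g.card_roots'
    rw [hgdeg] at h2
    exact le_trans h1 h2
  omega

/-- If a skew Hadamard difference set `D'` in `𝔽_q` (`q ≡ 3 (mod 4)`) has at least three
distinct triple intersection numbers `T_{β,a}(D')`, `β ∈ 𝔽_q^*`, then `D'` is not
equivalent to the Paley difference set (the set of nonzero squares of `𝔽_q`). -/
theorem not_equivalent_to_paley_of_three_tripleInt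
    (p f q : ℕ) (hp : p.Prime) (hodd : Odd p)
    (F : Type*) [Field F] [Fintype F] (hF : Fintype.card F = q)
    (hq : q = p ^ f) (hq3 : q % 4 = 3)
    (a : F) (ha0 : a ≠ 0) (ha1 : a ≠ 1) (hap : a ^ p = a)
    (D' : Set F) (hD' : IsSkewHadamardDiffSet D')
    (h3 : 3 ≤ Set.ncard {n : ℕ | ∃ β : F, β ≠ 0 ∧ tripleInt β a D' = n}) :
    ¬ ∃ (σ : F ≃+ F) (x : F),
        (fun y => σ y + x) '' D' = {z : F | z ≠ 0 ∧ ∃ y : F, z = y ^ 2} := by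
  classical
  rintro ⟨σ, x₀, himg⟩
  set P : Set F := {z : F | z ≠ 0 ∧ ∃ y : F, z = y ^ 2} with hPdef
  haveI : Fact p.Prime := ⟨hp⟩
  -- the characteristic of F is p
  have hf0 : f ≠ 0 := by
    rintro rfl
    rw [pow_zero] at hq
    omega
  haveI hcharF : CharP F (ringChar F) := ringChar.charP F
  obtain ⟨m, hrprime, hrcard⟩ := FiniteField.card F (ringChar F)
  have hrp : ringChar F = p := by
    have hdvd : p ∣ (ringChar F) ^ (m : ℕ) := by
      rw [← hrcard, hF, hq]
      exact dvd_pow_self p hf0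
    exact ((Nat.prime_dvd_prime_iff_eq hp hrprime).mp (hp.dvd_of_dvd_pow hdvd)).symm
  haveI : CharP F p := by rw [← hrp]; exact hcharF
  -- a lies in the prime field, hence commutes with σ
  obtain ⟨n, rfl⟩ := eq_natCast_of_pow_char p a hap
  have hcomm : ∀ y : F, σ ((n : F) * y) = (n : F) * σ y := by
    intro y
    rw [← nsmul_eq_mul, map_nsmul, nsmul_eq_mul]
  -- -1 is not a square
  have hns : ¬ IsSquare (-1 : F) := by
    rw [FiniteField.isSquare_neg_one_iff, hF, hq3]
    simp
  have hchar2 : ringChar F ≠ 2 := by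
    rw [hrp]
    intro h2
    rw [h2] at hodd
    exact (Nat.not_odd_iff_even.mpr even_two) hodd
  -- every triple intersection number of D' is one of two values
  have hsub : {k : ℕ | ∃ β : F, β ≠ 0 ∧ tripleInt β (n : F) D' = k}
      ⊆ {tripleInt 1 (n : F) P, tripleInt (-1) (n : F) P} := by
    rintro k ⟨β, hβ, rfl⟩
    have hγ : σ β ≠ 0 := by
      intro h
      exact hβ (σ.injective (by simpa using h))
    rw [tripleInt_transfer σ x₀ β (n : F) D' P himg hcomm]
    by_cases hsq : IsSquare (σ β)
    · obtain ⟨c, hc⟩ := hsq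
      have hc0 : c ≠ 0 := by
        rintro rfl
        simp at hc
        exact hβ hc
      have : σ β = c ^ 2 * 1 := by rw [hc]; ring
      rw [this, tripleInt_sq_mul c 1 (n : F) hc0]
      exact Set.mem_insert _ _
    · have hsq' : IsSquare (-(σ β)) := by
        have h1 : quadraticChar F (σ β) = -1 :=
          quadraticChar_neg_one_iff_not_isSquare.mpr hsq
        have h2 : quadraticChar F (-1 : F) = -1 :=
          quadraticChar_neg_one_iff_not_isSquare.mpr hns
        have h3 : quadraticChar F (-(σ β)) = 1 := by
          rw [show -(σ β) = (-1 : F) * σ β by ring, map_mul, h1, h2]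
          ring
        exact (quadraticChar_one_iff_isSquare (neg_ne_zero.mpr hγ)).mp h3
      obtain ⟨c, hc⟩ := hsq'
      have hc0 : c ≠ 0 := by
        rintro rfl
        simp at hc
        exact hβ hc
      have : σ β = c ^ 2 * (-1) := by
        have : -(σ β) = c ^ 2 := by rw [hc]; ring
        rw [← neg_neg (σ β), this]; ring
      rw [this, tripleInt_sq_mul c (-1) (n : F) hc0]
      exact Set.mem_insert_of_mem _ rfl
  have hle : Set.ncard {k : ℕ | ∃ β : F, β ≠ 0 ∧ tripleInt β (n : F) D' = k} ≤ 2 := by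
    refine le_trans (Set.ncard_le_ncard hsub ((Set.finite_singleton _).insert _)) ?_
    refine le_trans (Set.ncard_insert_le _ _) ?_
    rw [Set.ncard_singleton]
  omega
end

section
/- Feng–Xiang setting; let t be an odd prime with gcd(t, p1) = 1, let t^{-1} be the inverse of t modulo N, let γ be a primitive element of F_{q^t} and ω = γ^{(q^t−1)/(q−1)}. Let D1 = ⋃_{i∈I1} ω^i⟨ω^N⟩ and D2 = ⋃_{i∈I2} ω^i⟨ω^N⟩ be two Feng–Xiang skew Hadamard difference sets in F_q with index sets I1, I2, and let D1' = ⋃_{i∈I1} γ^i⟨γ^N⟩ and D2' = ⋃_{i∈I2} γ^i⟨γ^N⟩ be their lifts to F_{q^t}. Fix a ∈ F_p^* \ {1}. If {T_{ω^ℓ,a}(D1^{(t^{-1})}) mod t : 0 ≤ ℓ ≤ N−1} ≠ {T_{ω^ℓ,a}(D2^{(t^{-1})}) mod t : 0 ≤ ℓ ≤ N−1} as subsets of Z/tZ, then {T_{γ^ℓ,a}(D1') mod t : 0 ≤ ℓ ≤ N−1} ≠ {T_{γ^ℓ,a}(D2') mod t : 0 ≤ ℓ ≤ N−1}; in particular D1'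 and D2' are inequivalent (no automorphism σ of (F_{q^t},+) and x ∈ F_{q^t} satisfy σ(D1') + x = D2'). -/
open Function Set

theorem Set.ncard_modEq_ncard_inter_fixedPoints {α : Type*} [Finite α] {t : ℕ} [Fact t.Prime]
    {S : Set α} {τ : α → α} (hS : MapsTo τ S S) (hτ : τ^[t] = id) :
    S.ncard ≡ (S ∩ fixedPoints τ).ncard [MOD t] := by
  classical
  have : Fintype S := Fintype.ofFinite S
  let f : Function.End S := hS.restrict
  have hf : f ^ t ^ 1 = 1 := by
    rw [pow_one]
    funext x
    exact Subtype.ext (by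
      show (hS.restrict^[t] x : α) = x
      rw [hS.iterate_restrict, MapsTo.val_restrict_apply, hτ, id])
  have hval : S ∩ fixedPoints τ = Subtype.val '' fixedPoints f := by
    ext x
    simp [f, MapsTo.restrict, Subtype.map, IsFixedPt, Subtype.ext_iff, and_comm]
  have := Equiv.Perm.card_fixedPoints_modEq hf
  rw [← Nat.card_eq_fintype_card, ← Nat.card_eq_fintype_card, Nat.card_coe_set_eq,
    Nat.card_coe_set_eq] at this
  rwa [hval, ncard_image_of_injective _ Subtype.val_injective]

theorem Function.Periodic.coe_image_range {α : Type*} [DecidableEq α] {f : ℕ → α} {N : ℕ}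
    (hf : Periodic f N) (hN : N ≠ 0) : ((Finset.range N).image f : Set α) = range f := by
  ext y
  simp only [Finset.coe_image, Finset.coe_range, mem_image, mem_Iio, mem_range]
  exact ⟨fun ⟨ℓ, _, hℓ⟩ => ⟨ℓ, hℓ⟩,
    fun ⟨ℓ, hℓ⟩ => ⟨ℓ % N, Nat.mod_lt ℓ (Nat.pos_of_ne_zero hN), (hf.map_mod_nat ℓ).trans hℓ⟩⟩

theorem Function.Periodic.range_comp_mul {α : Type*} {f : ℕ → α} {N c c' : ℕ}
    (hf : Periodic f N) (hc : c * c' ≡ 1 [MOD N]) : range (fun ℓ => f (c * ℓ)) = range f := by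
  refine (range_comp_subset_range _ f).antisymm ?_
  rintro _ ⟨ℓ, rfl⟩
  refine ⟨c' * ℓ, ?_⟩
  have : c * (c' * ℓ) ≡ ℓ [MOD N] := by simpa [mul_assoc] using hc.mul_right ℓ
  show f (c * (c' * ℓ)) = f ℓ
  rw [← hf.map_mod_nat, ← hf.map_mod_nat ℓ, this]

section TripleInt

variable {F : Type*} [Field F] {a β : F} {D : Set F}

theorem tripleInt_preimage (e : F ≃ F) {β' : F} (h₁ : ∀ x, e (x + β) = e x + β')
    (h₂ : ∀ x, e (x + a * β) = e x + a * β') :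
    tripleInt β a (e ⁻¹' D) = tripleInt β' a D := by
  have : {x | x ∈ e ⁻¹' D ∧ x + β ∈ e ⁻¹' D ∧ x + a * β ∈ e ⁻¹' D} =
      e ⁻¹' {y | y ∈ D ∧ y + β' ∈ D ∧ y + a * β' ∈ D} := by
    ext x
    simp only [mem_preimage, mem_ofPred_eq, h₁, h₂]
  rw [tripleInt, tripleInt, this, ncard_preimage_of_injective_subset_range e.injective (by simp)]

theorem tripleInt_mul_left {c : F} (hc : c ≠ 0) :
    tripleInt β a ((c * ·) ⁻¹' D) = tripleInt (c * β) a D :=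
  tripleInt_preimage (Equiv.mulLeft₀ c hc) (fun x => mul_add c x β)
    (fun x => by simp only [Equiv.mulLeft₀_apply]; ring)

theorem tripleInt_eq_of_image_eq {D₂ : Set F} (σ : F ≃+ F) (hσ : ∀ y, σ (a * y) = a * σ y)
    (x : F) (h : (fun y => σ y + x) '' D = D₂) : tripleInt β a D = tripleInt (σ β) a D₂ := by
  let e : F ≃ F := σ.toEquiv.trans (Equiv.addRight x)
  have hD : D = e ⁻¹' D₂ := by rw [← h]; exact (e.preimage_image D).symm
  rw [hD]
  exact tripleInt_preimage e (fun y => by simp [e, add_right_comm])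
    (fun y => by simp [e, hσ, add_right_comm])

theorem tripleInt_modEq_tripleInt_inter_fixedPoints [Finite F] {t : ℕ} [Fact t.Prime]
    (φ : F →+* F) (hφt : φ^[t] = id) (hφa : φ a = a) (hφβ : φ β = β) (hD : MapsTo φ D D) :
    tripleInt β a D ≡ tripleInt β a (D ∩ fixedPoints φ) [MOD t] := by
  have hS : MapsTo φ {x | x ∈ D ∧ x + β ∈ D ∧ x + a * β ∈ D}
      {x | x ∈ D ∧ x + β ∈ D ∧ x + a * β ∈ D} := by
    rintro x ⟨h₀, h₁, h₂⟩
    refine ⟨hD h₀, ?_, ?_⟩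
    · simpa [hφβ] using hD h₁
    · simpa [hφa, hφβ] using hD h₂
  have hfix : {x | x ∈ D ∧ x + β ∈ D ∧ x + a * β ∈ D} ∩ fixedPoints φ =
      {x | x ∈ D ∩ fixedPoints φ ∧ x + β ∈ D ∩ fixedPoints φ ∧
        x + a * β ∈ D ∩ fixedPoints φ} := by
    ext x
    simp only [mem_inter_iff, mem_ofPred_eq, mem_fixedPoints, IsFixedPt, map_add, map_mul, hφa,
      hφβ, add_left_inj]
    tauto
  rw [tripleInt, tripleInt, ← hfix]
  exact ncard_modEq_ncard_inter_fixedPoints hS hφt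

theorem image_tripleInt_compl_zero_eq_of_image_eq {D₂ : Set F} (σ : F ≃+ F)
    (hσ : ∀ y, σ (a * y) = a * σ y) (x : F) (h : (fun y => σ y + x) '' D = D₂) :
    (tripleInt · a D) '' {0}ᶜ = (tripleInt · a D₂) '' {0}ᶜ := by
  have : (tripleInt · a D) = (tripleInt · a D₂) ∘ σ :=
    funext fun β => tripleInt_eq_of_image_eq σ hσ x h
  rw [this, image_comp, image_compl_eq σ.bijective, image_singleton, map_zero]

end TripleInt

/-- `⋃_{j ∈ J} g ^ j ⟨g ^ N⟩`: the Feng–Xiang set with its index set replaced by the residues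
`J ⊆ ℤ/Nℤ`. -/
def cosetUnion {M : Type*} [Monoid M] (g : M) (N : ℕ) (J : Set (ZMod N)) : Set M :=
  {x | ∃ k : ℕ, (k : ZMod N) ∈ J ∧ g ^ k = x}

section CosetUnion

variable {M : Type*} [CommMonoid M] {g : M} {n N : ℕ} {J : Set (ZMod N)}

theorem pow_mem_cosetUnion_iff [NeZero n] (hg : IsPrimitiveRoot g n) (hNn : N ∣ n) {k : ℕ} :
    g ^ k ∈ cosetUnion g N J ↔ (k : ZMod N) ∈ J := by
  refine ⟨fun ⟨j, hj, hjk⟩ => ?_, fun hk => ⟨k, hk, rfl⟩⟩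
  have := ((hg.isOfFinOrder (NeZero.ne n)).pow_eq_pow_iff_modEq.mp hjk)
  rw [← hg.eq_orderOf] at this
  rwa [← (ZMod.natCast_eq_natCast_iff _ _ _).mpr (this.of_dvd hNn)]

theorem pow_mul_mem_cosetUnion_iff [NeZero n] (hgn : g ^ n = 1) {d : ℕ}
    (hd : (d : ZMod N) = 0) {x : M} :
    g ^ d * x ∈ cosetUnion g N J ↔ x ∈ cosetUnion g N J := by
  constructor
  · rintro ⟨k, hk, hkx⟩
    refine ⟨(n - 1) * d + k, by simpa [hd] using hk, ?_⟩
    rw [pow_add, hkx, ← mul_assoc, ← pow_add, ← add_one_mul, Nat.sub_add_cancel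
      NeZero.one_le, pow_mul, hgn, one_pow, one_mul]
  · rintro ⟨k, hk, rfl⟩
    exact ⟨d + k, by simpa [hd] using hk, pow_add g d k⟩

theorem pow_mem_cosetUnion {q : ℕ} (hq : (q : ZMod N) = 1) {x : M}
    (hx : x ∈ cosetUnion g N J) : x ^ q ∈ cosetUnion g N J := by
  obtain ⟨k, hk, rfl⟩ := hx
  exact ⟨k * q, by simpa [hq] using hk, pow_mul g k q⟩

theorem setOf_exists_pow_eq_cosetUnion [NeZero n] (hgn : g ^ n = 1) (hNn : N ∣ n)
    (c : ℕ) (I : Finset ℕ) :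
    {x | ∃ i ∈ I, ∃ j : ℕ, x = g ^ (c * i + N * j)} =
      cosetUnion g N (((c : ZMod N) * ·) '' (Nat.cast '' I)) := by
  ext x
  constructor
  · rintro ⟨i, hi, j, rfl⟩
    exact ⟨c * i + N * j, ⟨i, ⟨i, hi, rfl⟩, by simp⟩, rfl⟩
  · rintro ⟨k, ⟨_, ⟨i, hi, rfl⟩, hk⟩, rfl⟩
    have hle : c * i ≤ k + n * (c * i) := le_add_left (Nat.le_mul_of_pos_left _ NeZero.one_le)
    have hmod : c * i ≡ k + n * (c * i) [MOD N] := by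
      rw [← ZMod.natCast_eq_natCast_iff]
      simp [(ZMod.natCast_eq_zero_iff n N).mpr hNn, ← hk]
    obtain ⟨j, hj⟩ := (Nat.modEq_iff_dvd' hle).mp hmod
    refine ⟨i, hi, j, ?_⟩
    rw [← hj, Nat.add_sub_cancel' hle, pow_add, pow_mul, hgn, one_pow, mul_one]

end CosetUnion

theorem periodic_tripleInt_pow_cosetUnion {K : Type*} [Field K] {g : K} {n : ℕ} [NeZero n]
    (hgn : g ^ n = 1) (N : ℕ) (a : K) (J : Set (ZMod N)) :
    Periodic (fun k => tripleInt (g ^ k) a (cosetUnion g N J)) N := by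
  intro k
  have hC : (g ^ N * ·) ⁻¹' cosetUnion g N J = cosetUnion g N J :=
    ext fun x => pow_mul_mem_cosetUnion_iff hgn (ZMod.natCast_self N)
  have hg : g ≠ 0 := (IsUnit.of_pow_eq_one hgn (NeZero.ne n)).ne_zero
  dsimp only
  rw [add_comm, pow_add, ← tripleInt_mul_left (pow_ne_zero N hg), hC]

theorem cosetUnion_pow_eq_inter {R : Type*} [CommRing R] [IsDomain R] {g : R} {n N m : ℕ}
    {J : Set (ZMod N)} [NeZero n] [NeZero m] {E c : ℕ} (hg : IsPrimitiveRoot g n)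
    (hNn : N ∣ n) (hgE : IsPrimitiveRoot (g ^ E) m) (hc : (E * c : ZMod N) = 1) :
    cosetUnion (g ^ E) N (((c : ZMod N) * ·) '' J) = cosetUnion g N J ∩ {x | x ^ (m + 1) = x} := by
  ext x
  constructor
  · rintro ⟨k, ⟨j, hj, hjk⟩, rfl⟩
    refine ⟨⟨E * k, ?_, pow_mul g E k⟩, ?_⟩
    · rwa [Nat.cast_mul, ← hjk, ← mul_assoc, hc, one_mul]
    · rw [mem_ofPred_eq, pow_succ, ← pow_mul, mul_comm k, pow_mul, hgE.pow_eq_one, one_pow, one_mul]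
  · rintro ⟨hx, hxm⟩
    have hxm : x ^ m = 1 := by
      obtain ⟨j, -, rfl⟩ := hx
      rw [mem_ofPred_eq, pow_succ] at hxm
      exact ((hg.isUnit (NeZero.ne n)).pow j).mul_eq_right.mp hxm
    obtain ⟨k, -, rfl⟩ := hgE.eq_pow_of_pow_eq_one hxm
    rw [← pow_mul, pow_mem_cosetUnion_iff hg hNn] at hx
    refine ⟨k, ⟨_, hx, ?_⟩, rfl⟩
    show (c : ZMod N) * _ = _
    rw [Nat.cast_mul, ← mul_assoc, mul_comm (c : ZMod N), hc, one_mul]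

theorem IsPrimitiveRoot.range_pow_eq_compl_zero {K : Type*} [Field K] [Fintype K] {γ : K}
    (hγ : IsPrimitiveRoot γ (Fintype.card K - 1)) : range (γ ^ · : ℕ → K) = {0}ᶜ := by
  have : NeZero (Fintype.card K - 1) := ⟨by have := Fintype.one_lt_card (α := K); omega⟩
  ext x
  refine ⟨fun ⟨k, hk⟩ => hk ▸ pow_ne_zero k (hγ.ne_zero (NeZero.ne _)), fun hx => ?_⟩
  obtain ⟨k, -, hk⟩ := hγ.eq_pow_of_pow_eq_one (FiniteField.pow_card_sub_one_eq_one x hx)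
  exact ⟨k, hk⟩

theorem IsPrimitiveRoot.pow_div_sub_one {K : Type*} [Field K] {γ : K} {q t : ℕ}
    (hγ : IsPrimitiveRoot γ (q ^ t - 1)) (hq : 2 ≤ q) (ht : t ≠ 0) :
    IsPrimitiveRoot (γ ^ ((q ^ t - 1) / (q - 1))) (q - 1) := by
  have hdvd := Nat.sub_one_dvd_pow_sub_one q t
  have hle : q - 1 ≤ q ^ t - 1 := Nat.sub_le_sub_right (Nat.le_self_pow ht q) 1
  have hpos : 0 < q ^ t - 1 := by omega
  have := hγ.pow_of_dvd (Nat.div_pos hle (by omega)).ne' (Nat.div_dvd_of_dvd hdvd)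
  rwa [Nat.div_div_self hdvd hpos.ne'] at this

theorem ZMod.natCast_eq_one_iff_dvd_sub_one {q N : ℕ} (hq : 1 ≤ q) :
    (q : ZMod N) = 1 ↔ N ∣ q - 1 := by
  rw [← Nat.cast_one, eq_comm, ZMod.natCast_eq_natCast_iff, Nat.modEq_iff_dvd' hq]

theorem ZMod.natCast_pow_sub_one_div_sub_one {N q : ℕ} (hqN : (q : ZMod N) = 1) (hq : 2 ≤ q)
    (t : ℕ) :
    (((q ^ t - 1) / (q - 1) : ℕ) : ZMod N) = t := by
  rw [← Nat.geomSum_eq hq]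
  simp [hqN]

theorem map_mul_of_pow_char_eq_self {K : Type*} [Field K] (p : ℕ) [Fact p.Prime] [CharP K p]
    (σ : K →+ K) {a : K} (ha : a ^ p = a) (y : K) : σ (a * y) = a * σ y := by
  obtain ⟨n, rfl⟩ := (mem_bot_iff_intCast p K).mp ((Subfield.mem_bot_iff_pow_eq_self K p).mpr ha)
  rw [← zsmul_eq_mul, map_zsmul, zsmul_eq_mul]

theorem two_le_of_card_eq_pow {α : Type*} [Fintype α] [Nontrivial α] {q t : ℕ}
    (hα : Fintype.card α = q ^ t) (ht : t ≠ 0) : 2 ≤ q := by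
  have := Fintype.one_lt_card (α := α)
  rwa [hα, Nat.one_lt_pow_iff ht] at this

theorem iterate_eq_id_of_forall_eq_pow {K : Type*} [GroupWithZero K] [Fintype K] {q t : ℕ}
    (hK : Fintype.card K = q ^ t) {φ : K → K} (hφ : ∀ x, φ x = x ^ q) : φ^[t] = id := by
  rw [funext hφ, pow_iterate, ← hK]
  exact funext FiniteField.pow_card

theorem tripleInt_pow_cosetUnion_modEq_subfield {K : Type*} [Field K] [Fintype K]
    {q t tinv N : ℕ} [Fact t.Prime] (hK : Fintype.card K = q ^ t) (φ : K →+* K)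
    (hφ : ∀ x, φ x = x ^ q) (hqN : (q : ZMod N) = 1) (htinv : t * tinv ≡ 1 [MOD N]) {γ : K}
    (hγ : IsPrimitiveRoot γ (q ^ t - 1)) {a : K} (ha : a ^ q = a) (J : Set (ZMod N)) (ℓ : ℕ) :
    tripleInt (γ ^ ℓ) a (cosetUnion γ N J) ≡
      tripleInt ((γ ^ ((q ^ t - 1) / (q - 1))) ^ (tinv * ℓ)) a
        (cosetUnion (γ ^ ((q ^ t - 1) / (q - 1))) N (((tinv : ZMod N) * ·) '' J)) [MOD t] := by
  set E := (q ^ t - 1) / (q - 1)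
  have ht : t ≠ 0 := (Fact.out : t.Prime).ne_zero
  have hq := two_le_of_card_eq_pow hK ht
  have : NeZero (q ^ t - 1) := ⟨by have := Nat.le_self_pow ht q; omega⟩
  have : NeZero (q - 1) := ⟨by omega⟩
  have hω := hγ.pow_div_sub_one hq ht
  have hNq : N ∣ q - 1 := (ZMod.natCast_eq_one_iff_dvd_sub_one (by omega)).mp hqN
  have htinv' : (t * tinv : ZMod N) = 1 := by
    exact_mod_cast (ZMod.natCast_eq_natCast_iff _ _ _).mpr htinv
  have hEt : (E : ZMod N) = t := ZMod.natCast_pow_sub_one_div_sub_one hqN hq t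
  have hωq : (γ ^ E) ^ q = γ ^ E := by
    conv_lhs => rw [← Nat.sub_add_cancel (by omega : 1 ≤ q)]
    rw [pow_succ, hω.pow_eq_one, one_mul]
  have hfix : fixedPoints φ = {x | x ^ (q - 1 + 1) = x} := by
    ext x
    rw [Nat.sub_add_cancel (by omega : 1 ≤ q), mem_fixedPoints, IsFixedPt, hφ, mem_ofPred_eq]
  have hshift : E * (tinv * ℓ) ≡ ℓ [MOD N] := by
    rw [← ZMod.natCast_eq_natCast_iff]
    push_cast
    rw [hEt, ← mul_assoc, htinv', one_mul]
  have hper := periodic_tripleInt_pow_cosetUnion hγ.pow_eq_one N a J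
  calc tripleInt (γ ^ ℓ) a (cosetUnion γ N J)
      = tripleInt ((γ ^ E) ^ (tinv * ℓ)) a (cosetUnion γ N J) := by
        rw [← pow_mul, ← hper.map_mod_nat (E * _), hshift, hper.map_mod_nat]
    _ ≡ tripleInt ((γ ^ E) ^ (tinv * ℓ)) a (cosetUnion γ N J ∩ fixedPoints φ) [MOD t] :=
        tripleInt_modEq_tripleInt_inter_fixedPoints φ (iterate_eq_id_of_forall_eq_pow hK hφ)
          (by rw [hφ, ha])
          (by rw [hφ, ← pow_mul, mul_comm, pow_mul, hωq])
          (fun x hx => by rw [hφ]; exact pow_mem_cosetUnion hqN hx)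
    _ = _ := by
        rw [hfix, ← cosetUnion_pow_eq_inter (c := tinv) hγ
          (hNq.trans (Nat.sub_one_dvd_pow_sub_one q t)) hω (by rw [hEt, htinv'])]

theorem image_range_tripleInt_cosetUnion_eq_subfield {K : Type*} [Field K]
    [Fintype K] {q t tinv N : ℕ} [Fact t.Prime] (hN : N ≠ 0) (hK : Fintype.card K = q ^ t)
    (φ : K →+* K) (hφ : ∀ x, φ x = x ^ q) (hqN : (q : ZMod N) = 1) (htinv : t * tinv ≡ 1 [MOD N])
    {γ : K} (hγ : IsPrimitiveRoot γ (q ^ t - 1)) {a : K} (ha : a ^ q = a) (J : Set (ZMod N)) :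
    (Finset.range N).image (fun ℓ => (tripleInt (γ ^ ℓ) a (cosetUnion γ N J) : ZMod t)) =
      (Finset.range N).image (fun ℓ => (tripleInt ((γ ^ ((q ^ t - 1) / (q - 1))) ^ ℓ) a
        (cosetUnion (γ ^ ((q ^ t - 1) / (q - 1))) N (((tinv : ZMod N) * ·) '' J)) : ZMod t)) := by
  have ht : t ≠ 0 := (Fact.out : t.Prime).ne_zero
  have hq := two_le_of_card_eq_pow hK ht
  have : NeZero (q ^ t - 1) := ⟨by have := Nat.le_self_pow ht q; omega⟩
  have : NeZero (q - 1) := ⟨by omega⟩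
  set ω := γ ^ ((q ^ t - 1) / (q - 1))
  have hper' : Periodic (fun ℓ => (tripleInt (ω ^ ℓ) a
      (cosetUnion ω N (((tinv : ZMod N) * ·) '' J)) : ZMod t)) N :=
    (periodic_tripleInt_pow_cosetUnion (hγ.pow_div_sub_one hq ht).pow_eq_one N a _).comp _
  apply Finset.coe_injective
  rw [Periodic.coe_image_range ?_ hN, hper'.coe_image_range hN,
    ← hper'.range_comp_mul (c := tinv) (c' := t) (by rwa [mul_comm])]
  · congr 1
    funext ℓ
    exact (ZMod.natCast_eq_natCast_iff _ _ _).mpr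
      (tripleInt_pow_cosetUnion_modEq_subfield hK φ hφ hqN htinv hγ ha J ℓ)
  · exact (periodic_tripleInt_pow_cosetUnion hγ.pow_eq_one N a J).comp _

theorem image_range_tripleInt_cosetUnion_eq_of_image_eq {K : Type*} [Field K] [Fintype K]
    {N t : ℕ} (hN : N ≠ 0) {γ : K} (hγ : IsPrimitiveRoot γ (Fintype.card K - 1)) {a : K}
    {J₁ J₂ : Set (ZMod N)} (σ : K ≃+ K) (hσ : ∀ y, σ (a * y) = a * σ y) (x : K)
    (h : (fun y => σ y + x) '' cosetUnion γ N J₁ = cosetUnion γ N J₂) :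
    (Finset.range N).image (fun ℓ => (tripleInt (γ ^ ℓ) a (cosetUnion γ N J₁) : ZMod t)) =
      (Finset.range N).image (fun ℓ => (tripleInt (γ ^ ℓ) a (cosetUnion γ N J₂) : ZMod t)) := by
  have : NeZero (Fintype.card K - 1) := ⟨by have := Fintype.one_lt_card (α := K); omega⟩
  apply Finset.coe_injective
  rw [Periodic.coe_image_range ?_ hN, Periodic.coe_image_range ?_ hN]
  · change range (Nat.cast ∘ (tripleInt · a _) ∘ (γ ^ ·)) =
      range (Nat.cast ∘ (tripleInt · a _) ∘ (γ ^ ·))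
    rw [range_comp, range_comp, range_comp, range_comp, hγ.range_pow_eq_compl_zero,
      image_tripleInt_compl_zero_eq_of_image_eq σ hσ x h]
  all_goals exact (periodic_tripleInt_pow_cosetUnion hγ.pow_eq_one N a _).comp _

theorem lifts_inequivalent_of_distinct_tripleInt_mod_general
    (N p f s q t tinv : ℕ)
    (hp : p.Prime)
    (hord : orderOf (p : ZMod N) = f)
    (hq : q = p ^ (f * s))
    (ht : t.Prime)
    (htinv : t * tinv ≡ 1 [MOD N])
    (I1 I2 : Finset ℕ)
    (K : Type*) [Field K] [Fintype K] (hK : Fintype.card K = q ^ t)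
    (γ : K) (hγ : orderOf γ = q ^ t - 1)
    (ω : K) (hω : ω = γ ^ ((q ^ t - 1) / (q - 1)))
    (D1t : Set K) (hD1t : D1t = {x : K | ∃ i ∈ I1, ∃ j : ℕ, x = ω ^ (tinv * i + N * j)})
    (D2t : Set K) (hD2t : D2t = {x : K | ∃ i ∈ I2, ∃ j : ℕ, x = ω ^ (tinv * i + N * j)})
    (D1' : Set K) (hD1' : D1' = {x : K | ∃ i ∈ I1, ∃ j : ℕ, x = γ ^ (i + N * j)})
    (D2' : Set K) (hD2' : D2' = {x : K | ∃ i ∈ I2, ∃ j : ℕ, x = γ ^ (i + N * j)})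
    (a : K) (hap : a ^ p = a)
    (hne : (Finset.range N).image (fun ℓ => ((tripleInt (ω ^ ℓ) a D1t : ℕ) : ZMod t)) ≠
        (Finset.range N).image (fun ℓ => ((tripleInt (ω ^ ℓ) a D2t : ℕ) : ZMod t))) :
    ((Finset.range N).image (fun ℓ => ((tripleInt (γ ^ ℓ) a D1' : ℕ) : ZMod t)) ≠
        (Finset.range N).image (fun ℓ => ((tripleInt (γ ^ ℓ) a D2' : ℕ) : ZMod t))) ∧
      ¬ ∃ (σ : K ≃+ K) (x : K), (fun y => σ y + x) '' D1' = D2' := by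
  have hN0 : N ≠ 0 := by rintro rfl; exact hne rfl
  have : Fact p.Prime := ⟨hp⟩
  have : Fact t.Prime := ⟨ht⟩
  have : CharP K p := charP_of_card_eq_prime_pow (by rw [hK, hq, ← pow_mul])
  have hq2 := two_le_of_card_eq_pow hK ht.ne_zero
  have : NeZero (q ^ t - 1) := ⟨by have := Nat.le_self_pow ht.ne_zero q; omega⟩
  have : NeZero (q - 1) := ⟨by omega⟩
  have hγ' : IsPrimitiveRoot γ (q ^ t - 1) := hγ ▸ IsPrimitiveRoot.orderOf γ
  have hω' : IsPrimitiveRoot ω (q - 1) := hω ▸ hγ'.pow_div_sub_one hq2 ht.ne_zero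
  have hqN : (q : ZMod N) = 1 := by
    rw [hq, Nat.cast_pow, pow_mul, ← hord, pow_orderOf_eq_one, one_pow]
  have hNq : N ∣ q - 1 := (ZMod.natCast_eq_one_iff_dvd_sub_one (by omega)).mp hqN
  have hsetγ := setOf_exists_pow_eq_cosetUnion hγ'.pow_eq_one
    (hNq.trans (Nat.sub_one_dvd_pow_sub_one q t)) 1
  simp only [one_mul, Nat.cast_one, image_id'] at hsetγ
  rw [hsetγ] at hD1' hD2'
  rw [setOf_exists_pow_eq_cosetUnion hω'.pow_eq_one hNq] at hD1t hD2t
  subst hD1' hD2' hD1t hD2t hω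
  have ha : a ^ q = a := by
    have := (show IsFixedPt (· ^ p) a from hap).iterate (f * s)
    rwa [pow_iterate, ← hq] at this
  have hlift := image_range_tripleInt_cosetUnion_eq_subfield hN0 hK
    (iterateFrobenius K p (f * s)) (fun x => by rw [iterateFrobenius_def, hq]) hqN htinv hγ' ha
  rw [← hlift, ← hlift] at hne
  refine ⟨hne, fun ⟨σ, x, hσ⟩ => hne ?_⟩
  exact image_range_tripleInt_cosetUnion_eq_of_image_eq hN0 (hK ▸ hγ') σ
    (map_mul_of_pow_char_eq_self p σ.toAddMonoidHom hap) x hσ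

/-- Remark 3.2(ii): Feng–Xiang setting; `t` an odd prime coprime to `p₁`, `tinv` the
inverse of `t` mod `N`, `γ` primitive in `𝔽_{q^t}`, `ω = γ^{(q^t-1)/(q-1)}`.  If the two
Feng–Xiang skew Hadamard difference sets `D₁, D₂` (index sets `I₁, I₂`) satisfy
`{T_{ω^ℓ,a}(D₁^{(t⁻¹)}) mod t} ≠ {T_{ω^ℓ,a}(D₂^{(t⁻¹)}) mod t}`, then their lifts
`D₁', D₂'` to `𝔽_{q^t}` satisfy `{T_{γ^ℓ,a}(D₁') mod t} ≠ {T_{γ^ℓ,a}(D₂') mod t}`;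
in particular `D₁'` and `D₂'` are inequivalent. -/
theorem lifts_inequivalent_of_distinct_tripleInt_mod
    (p1 m N p f s q t tinv : ℕ)
    (hp1 : p1.Prime) (hp1mod : p1 % 8 = 7) (hm : 1 ≤ m) (hN : N = 2 * p1 ^ m)
    (hp : p.Prime) (hpmod : p % 4 = 3)
    (hf : f = N.totient / 2) (hord : orderOf (p : ZMod N) = f)
    (hs : Odd s) (hq : q = p ^ (f * s))
    (ht : t.Prime) (htodd : Odd t) (htp1 : Nat.Coprime t p1)
    (htinv : t * tinv ≡ 1 [MOD N])
    (I1 I2 : Finset ℕ) (hI1N : ∀ i ∈ I1, i < N) (hI2N : ∀ i ∈ I2, i < N)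
    (hI1cov : ∀ r : ZMod (p1 ^ m), ∃ i ∈ I1, (i : ZMod (p1 ^ m)) = r)
    (hI2cov : ∀ r : ZMod (p1 ^ m), ∃ i ∈ I2, (i : ZMod (p1 ^ m)) = r)
    (K : Type*) [Field K] [Fintype K] (hK : Fintype.card K = q ^ t)
    (γ : K) (hγ : orderOf γ = q ^ t - 1)
    (ω : K) (hω : ω = γ ^ ((q ^ t - 1) / (q - 1)))
    (D1t : Set K) (hD1t : D1t = {x : K | ∃ i ∈ I1, ∃ j : ℕ, x = ω ^ (tinv * i + N * j)})
    (D2t : Set K) (hD2t : D2t = {x : K | ∃ i ∈ I2, ∃ j : ℕ, x = ω ^ (tinv * i + N * j)})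
    (D1' : Set K) (hD1' : D1' = {x : K | ∃ i ∈ I1, ∃ j : ℕ, x = γ ^ (i + N * j)})
    (D2' : Set K) (hD2' : D2' = {x : K | ∃ i ∈ I2, ∃ j : ℕ, x = γ ^ (i + N * j)})
    (a : K) (ha0 : a ≠ 0) (ha1 : a ≠ 1) (hap : a ^ p = a)
    (hne : (Finset.range N).image (fun ℓ => ((tripleInt (ω ^ ℓ) a D1t : ℕ) : ZMod t)) ≠
        (Finset.range N).image (fun ℓ => ((tripleInt (ω ^ ℓ) a D2t : ℕ) : ZMod t))) :
    ((Finset.range N).image (fun ℓ => ((tripleInt (γ ^ ℓ) a D1' : ℕ) : ZMod t)) ≠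
        (Finset.range N).image (fun ℓ => ((tripleInt (γ ^ ℓ) a D2' : ℕ) : ZMod t))) ∧
      ¬ ∃ (σ : K ≃+ K) (x : K), (fun y => σ y + x) '' D1' = D2' :=
  lifts_inequivalent_of_distinct_tripleInt_mod_general N p f s q t tinv hp hord hq ht htinv I1 I2 K
    hK γ hγ ω hω D1t hD1t D2t hD2t D1' hD1' D2' hD2' a hap hne
end

section
/- Let q be a power of the prime p, let χ be a multiplicative character of F_q of order N > 1, let a ∈ F_q \ {0, 1}, let i1, i2, i3 be integers with i1, i2, i3 ≢ 0 (mod N), let t be an odd prime, and let χ' be the lift of χ to F_{q^t}. Then Σ_{x∈F_{q^t}} (χ')^{i1}(x)(χ')^{i2}(x+1)(χ')^{i3}(x+a) ≡ Σ_{x∈F_q} χ^{t·i1}(x)χ^{t·i2}(x+1)χ^{t·i3}(x+a) (mod t) in the ring of algebraic integers (both sides lie in Z[ζ_N]); here characters take the value 0 at 0 and a is regarded in F_{q^t} via F_q. -/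
/-- Congruence modulo `n` in the ring of algebraic integers: `(u - v)/n` is an
algebraic integer. -/
def AlgIntModEq (n : ℕ) (u v : ℂ) : Prop :=
  ∃ w : ℂ, IsIntegral ℤ w ∧ u - v = n * w

open Finset in
/-- Key combinatorial lemma: sums over sets closed under a permutation of
prime power order are congruent mod `t` to the sum over fixed points. -/
lemma orbit_sum_aux {α : Type*} [DecidableEq α] (e : Equiv.Perm α) {t : ℕ} (ht : t.Prime)
    (het : e ^ t = 1) (f : α → ℂ) (hf : ∀ x, f (e x) = f x) (hint : ∀ x, IsIntegral ℤ (f x)) :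
    ∀ s : Finset α, (∀ x ∈ s, e x ∈ s) →
      ∃ w : ℂ, IsIntegral ℤ w ∧
        ∑ x ∈ s, f x = ∑ x ∈ s.filter (fun x => e x = x), f x + t * w := by
  intro s
  induction s using Finset.strongInduction with
  | _ s ih =>
    intro hs
    rcases s.eq_empty_or_nonempty with rfl | ⟨x, hx⟩
    · exact ⟨0, isIntegral_zero, by simp⟩
    have htpos : 0 < t := ht.pos
    by_cases hfix : e x = x
    · -- remove the fixed point x
      have hsub : s.erase x ⊂ s := Finset.erase_ssubset hx
      have hclosed : ∀ y ∈ s.erase x, e y ∈ s.erase x := by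
        intro y hy
        rcases Finset.mem_erase.mp hy with ⟨hyx, hys⟩
        refine Finset.mem_erase.mpr ⟨?_, hs y hys⟩
        intro h
        exact hyx (e.injective (h.trans hfix.symm))
      obtain ⟨w, hw, hsum⟩ := ih _ hsub hclosed
      refine ⟨w, hw, ?_⟩
      have h1 : ∑ y ∈ s, f y = f x + ∑ y ∈ s.erase x, f y :=
        (Finset.add_sum_erase _ f hx).symm
      have h2 : (s.erase x).filter (fun y => e y = y)
          = (s.filter (fun y => e y = y)).erase x := Finset.filter_erase _ _ _
      have hxfil : x ∈ s.filter fun y => e y = y := Finset.mem_filter.mpr ⟨hx, hfix⟩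
      have h3 : ∑ y ∈ s.filter (fun y => e y = y), f y
          = f x + ∑ y ∈ (s.filter (fun y => e y = y)).erase x, f y :=
        (Finset.add_sum_erase _ f hxfil).symm
      rw [h1, hsum, h2, h3]; ring
    · -- remove the orbit of x, which has exactly t elements
      set O : Finset α := (Finset.range t).image (fun k => (e ^ k) x) with hO
      have hperiodic : ∀ d, d < t → (e ^ d) x = x → d = 0 := by
        intro d hd hdx
        by_contra hd0
        have h1 : Function.IsPeriodicPt e d x := by
          rwa [Function.IsPeriodicPt, Function.IsFixedPt, Equiv.Perm.iterate_eq_pow]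
        have h2 : Function.IsPeriodicPt e t x := by
          rw [Function.IsPeriodicPt, Function.IsFixedPt, Equiv.Perm.iterate_eq_pow, het]
          rfl
        have hgcd : Nat.gcd d t = 1 :=
          ((Nat.Prime.coprime_iff_not_dvd ht).mpr
            (fun hdvd => absurd (Nat.le_of_dvd (Nat.pos_of_ne_zero hd0) hdvd)
              (not_le.mpr hd))).symm
        have h3 := h1.gcd h2
        rw [hgcd] at h3
        exact hfix h3
      have horbinj : Set.InjOn (fun k => (e ^ k) x) (Finset.range t) := by
        intro j hj k hk hjk
        simp only [Finset.coe_range, Set.mem_Iio] at hj hk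
        have hjk' : (e ^ j) x = (e ^ k) x := hjk
        rcases le_total j k with hle | hle
        · have : (e ^ j) ((e ^ (k - j)) x) = (e ^ j) x := by
            rw [← Equiv.Perm.mul_apply, ← pow_add, Nat.add_sub_cancel' hle, hjk']
          have := hperiodic (k - j) (lt_of_le_of_lt (Nat.sub_le _ _) hk)
            ((e ^ j).injective this)
          omega
        · have : (e ^ k) ((e ^ (j - k)) x) = (e ^ k) x := by
            rw [← Equiv.Perm.mul_apply, ← pow_add, Nat.add_sub_cancel' hle, ← hjk']
          have := hperiodic (j - k) (lt_of_le_of_lt (Nat.sub_le _ _) hj)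
            ((e ^ k).injective this)
          omega
      have horbmem : ∀ k : ℕ, (e ^ k) x ∈ s := by
        intro k
        induction k with
        | zero => simpa using hx
        | succ k ihk =>
          have : (e ^ (k + 1)) x = e ((e ^ k) x) := by
            rw [pow_succ', Equiv.Perm.mul_apply]
          rw [this]; exact hs _ ihk
      have hOsub : O ⊆ s := by
        intro y hy
        obtain ⟨k, -, rfl⟩ := Finset.mem_image.mp hy
        exact horbmem k
      have hxO : x ∈ O := Finset.mem_image.mpr ⟨0, Finset.mem_range.mpr htpos, by simp⟩
      have hfconst : ∀ k : ℕ, f ((e ^ k) x) = f x := by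
        intro k
        induction k with
        | zero => simp
        | succ k ihk =>
          rw [pow_succ', Equiv.Perm.mul_apply, hf, ihk]
      have hnofix : ∀ y ∈ O, e y ≠ y := by
        intro y hy hey
        obtain ⟨k, hk, rfl⟩ := Finset.mem_image.mp hy
        have hally : ∀ n : ℕ, (e ^ n) ((e ^ k) x) = (e ^ k) x := by
          intro n
          induction n with
          | zero => simp
          | succ n ihn => rw [pow_succ', Equiv.Perm.mul_apply, ihn, hey]
        have hk' : k < t := Finset.mem_range.mp hk
        have : (e ^ (t - k)) ((e ^ k) x) = x := by
          rw [← Equiv.Perm.mul_apply, ← pow_add, Nat.sub_add_cancel hk'.le, het]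
          rfl
        rw [hally (t - k)] at this
        exact hfix (this ▸ hey)
      have hOcard : O.card = t := by
        rw [hO, Finset.card_image_of_injOn horbinj, Finset.card_range]
      have hOsum : ∑ y ∈ O, f y = t * f x := by
        rw [hO, Finset.sum_image horbinj]
        simp only [hfconst]
        rw [Finset.sum_const, Finset.card_range, nsmul_eq_mul]
      -- the complement
      have hssub : s \ O ⊂ s := by
        refine Finset.ssubset_iff_of_subset (Finset.sdiff_subset) |>.mpr ⟨x, hx, ?_⟩
        simp [hxO]
      have hclosed : ∀ y ∈ s \ O, e y ∈ s \ O := by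
        intro y hy
        rcases Finset.mem_sdiff.mp hy with ⟨hys, hyO⟩
        refine Finset.mem_sdiff.mpr ⟨hs y hys, ?_⟩
        intro heyO
        obtain ⟨k, hk, hke⟩ := Finset.mem_image.mp heyO
        have hk' : k < t := Finset.mem_range.mp hk
        apply hyO
        rcases Nat.eq_zero_or_pos k with rfl | hkpos
        · -- e y = x, so y = e⁻¹ x = (e ^ (t-1)) x
          have : y = (e ^ (t - 1)) x := by
            apply e.injective
            rw [← Equiv.Perm.mul_apply, ← pow_succ', Nat.sub_add_cancel htpos, het,
              ← hke]
            simp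
          rw [this]
          exact Finset.mem_image.mpr ⟨t - 1, Finset.mem_range.mpr (Nat.sub_lt htpos one_pos),
            rfl⟩
        · have : y = (e ^ (k - 1)) x := by
            apply e.injective
            rw [← Equiv.Perm.mul_apply, ← pow_succ', Nat.sub_add_cancel hkpos, hke]
          rw [this]
          exact Finset.mem_image.mpr ⟨k - 1, Finset.mem_range.mpr
            (lt_of_le_of_lt (Nat.sub_le _ _) hk'), rfl⟩
      obtain ⟨w, hw, hsum⟩ := ih _ hssub hclosed
      refine ⟨w + f x, hw.add (hint x), ?_⟩
      have hfilter : (s \ O).filter (fun y => e y = y) = s.filter (fun y => e y = y) := by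
        ext y
        simp only [Finset.mem_filter, Finset.mem_sdiff]
        constructor
        · rintro ⟨⟨h1, h2⟩, h3⟩; exact ⟨h1, h3⟩
        · rintro ⟨h1, h3⟩; exact ⟨⟨h1, fun hyO => hnofix y hyO h3⟩, h3⟩
      have hsplit : ∑ y ∈ s \ O, f y + ∑ y ∈ O, f y = ∑ y ∈ s, f y :=
        Finset.sum_sdiff hOsub
      rw [← hsplit, hsum, hfilter, hOsum]
      ring


/-- For a multiplicative character `χ` of `𝔽_q` of order `N > 1`, `a ∈ 𝔽_q \ {0,1}`,
`i₁,i₂,i₃ ≢ 0 (mod N)`, an odd prime `t`, and `χ'` the lift of `χ` to `𝔽_{q^t}`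
(via the norm), one has
`Σ_{x∈𝔽_{q^t}} χ'^{i₁}(x) χ'^{i₂}(x+1) χ'^{i₃}(x+a)
  ≡ Σ_{x∈𝔽_q} χ^{ti₁}(x) χ^{ti₂}(x+1) χ^{ti₃}(x+a) (mod t)`
in the ring of algebraic integers. -/
theorem lifted_char_sum_congruent_mod_prime
    (p : ℕ) (hp : p.Prime) (F : Type*) [Field F] [Fintype F]
    (hF : ∃ f : ℕ, Fintype.card F = p ^ f)
    (N : ℕ) (hN : 1 < N) (χ : MulChar F ℂ) (hχ : orderOf χ = N)
    (a : F) (ha0 : a ≠ 0) (ha1 : a ≠ 1)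
    (i1 i2 i3 : ℕ) (h1 : ¬ N ∣ i1) (h2 : ¬ N ∣ i2) (h3 : ¬ N ∣ i3)
    (t : ℕ) (ht : t.Prime) (htodd : Odd t)
    (E : Type*) [Field E] [Fintype E] [Algebra F E]
    (hE : Fintype.card E = Fintype.card F ^ t)
    (χ' : MulChar E ℂ) (hχ' : ∀ x : E, χ' x = χ (Algebra.norm F x)) :
    AlgIntModEq t
      (∑ x : E, (χ' ^ i1) x * (χ' ^ i2) (x + 1) * (χ' ^ i3) (x + algebraMap F E a))
      (∑ x : F, (χ ^ (t * i1)) x * (χ ^ (t * i2)) (x + 1) * (χ ^ (t * i3)) (x + a)) := by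
  classical
  obtain ⟨fe, hq⟩ := hF
  set q := Fintype.card F with hqdef
  have hq2 : 1 < q := Fintype.one_lt_card
  have hfe : fe ≠ 0 := by rintro rfl; rw [hq] at hq2; simp at hq2
  -- characteristic
  have hpr : p = ringChar F := by
    haveI := ringChar.charP F
    obtain ⟨n, hrp, hcard⟩ := FiniteField.card F (ringChar F)
    have hdvd : p ∣ (ringChar F) ^ (n : ℕ) := by
      rw [← hcard, show Fintype.card F = p ^ fe from hq]
      exact dvd_pow_self p hfe
    have := hp.dvd_of_dvd_pow hdvd
    exact ((Nat.prime_dvd_prime_iff_eq hp hrp).mp this)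
  haveI hcharF : CharP F p := hpr ▸ ringChar.charP F
  haveI hcharE : CharP E p := charP_of_injective_ringHom (algebraMap F E).injective p
  haveI : Fact p.Prime := ⟨hp⟩
  -- the Frobenius x ↦ x^q as a ring hom and permutation of E
  set φ : E →+* E := iterateFrobenius E p fe with hφdef
  have hφ : ∀ x : E, φ x = x ^ q := by
    intro x; rw [hφdef, iterateFrobenius_def, hq]
  have hbij : Function.Bijective φ := Finite.injective_iff_bijective.mp φ.injective
  set e : Equiv.Perm E := Equiv.ofBijective φ hbij with hedef
  have he : ∀ x : E, e x = x ^ q := hφ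
  have hepow : ∀ (n : ℕ) (x : E), (e ^ n) x = x ^ q ^ n := by
    intro n
    induction n with
    | zero => intro x; simp
    | succ n ihn =>
      intro x
      rw [pow_succ', Equiv.Perm.mul_apply, ihn, he, ← pow_mul, pow_succ, mul_comm (q^n) q,
        pow_mul]
  have het : e ^ t = 1 := by
    ext x
    rw [hepow, ← hE, Equiv.Perm.one_apply, FiniteField.pow_card]
  -- positivity of exponents
  have hi1 : i1 ≠ 0 := fun h => h1 (h ▸ dvd_zero N)
  have hi2 : i2 ≠ 0 := fun h => h2 (h ▸ dvd_zero N)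
  have hi3 : i3 ≠ 0 := fun h => h3 (h ▸ dvd_zero N)
  -- integrality of character values
  have hχint : ∀ z : F, IsIntegral ℤ (χ z) := by
    intro z
    by_cases hz : z = 0
    · rw [hz, MulChar.map_nonunit χ (by simp)]; exact isIntegral_zero
    · refine IsIntegral.of_pow (n := q - 1) (by omega) ?_
      rw [← map_pow, FiniteField.pow_card_sub_one_eq_one z hz, MulChar.map_one]
      exact isIntegral_one
  have hχ'int : ∀ z : E, IsIntegral ℤ (χ' z) := fun z => (hχ' z) ▸ hχint _
  -- the summand
  set f : E → ℂ := fun x => (χ' ^ i1) x * (χ' ^ i2) (x + 1) * (χ' ^ i3) (x + algebraMap F E a)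
    with hfdef
  have hfint : ∀ x : E, IsIntegral ℤ (f x) := by
    intro x
    refine (IsIntegral.mul (IsIntegral.mul ?_ ?_) ?_) <;>
      rw [MulChar.pow_apply' _ (by assumption)] <;> exact IsIntegral.pow (hχ'int _) _
  -- invariance of χ' under x ↦ x^q
  have hχ'q : ∀ y : E, χ' (y ^ q) = χ' y := by
    intro y
    rw [hχ' (y ^ q), map_pow, FiniteField.pow_card, ← hχ' y]
  have hfe' : ∀ x : E, f (e x) = f x := by
    intro x
    have h1' : e x + 1 = (x + 1) ^ q := by
      have h := map_add φ x 1
      rw [map_one] at h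
      calc e x + 1 = φ x + 1 := rfl
        _ = φ (x + 1) := h.symm
        _ = (x + 1) ^ q := hφ _
    have ha' : e x + algebraMap F E a = (x + algebraMap F E a) ^ q := by
      have hc : φ (algebraMap F E a) = algebraMap F E a := by
        rw [hφ, ← map_pow, FiniteField.pow_card]
      calc e x + algebraMap F E a = φ x + φ (algebraMap F E a) := by rw [hc]; rfl
        _ = φ (x + algebraMap F E a) := (map_add φ _ _).symm
        _ = (x + algebraMap F E a) ^ q := hφ _
    have keyq : ∀ (i : ℕ), i ≠ 0 → ∀ y : E, (χ' ^ i) (y ^ q) = (χ' ^ i) y := by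
      intro i hi y
      rw [MulChar.pow_apply' _ hi, MulChar.pow_apply' _ hi, hχ'q]
    show (χ' ^ i1) (e x) * (χ' ^ i2) (e x + 1) * (χ' ^ i3) (e x + algebraMap F E a)
        = (χ' ^ i1) x * (χ' ^ i2) (x + 1) * (χ' ^ i3) (x + algebraMap F E a)
    rw [h1', ha', he, keyq i1 hi1, keyq i2 hi2, keyq i3 hi3]
  -- apply the key lemma
  obtain ⟨w, hw, hsum⟩ := orbit_sum_aux e ht het f hfe' hfint Finset.univ (by simp)
  -- fixed points = image of F
  set S : Finset E := Finset.univ.filter (fun x => e x = x) with hSdef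
  have hScard : S.card ≤ q := by
    set P : Polynomial E := Polynomial.X ^ q - Polynomial.X with hPdef
    have hP0 : P ≠ 0 := by
      intro h
      have : P.coeff 1 = 0 := by rw [h]; simp
      rw [hPdef, Polynomial.coeff_sub, Polynomial.coeff_X_pow, Polynomial.coeff_X_one,
        if_neg (by omega : ¬ (1 = q))] at this
      simp at this
    have hsub : S ⊆ P.roots.toFinset := by
      intro y hy
      have hy' : e y = y := (Finset.mem_filter.mp hy).2
      rw [Multiset.mem_toFinset, Polynomial.mem_roots hP0]
      rw [Polynomial.IsRoot, hPdef]
      simp only [Polynomial.eval_sub, Polynomial.eval_pow, Polynomial.eval_X]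
      rw [← he, hy', sub_self]
    calc S.card ≤ P.roots.toFinset.card := Finset.card_le_card hsub
      _ ≤ Multiset.card P.roots := Multiset.toFinset_card_le _
      _ ≤ P.natDegree := P.card_roots'
      _ ≤ q := by
          rw [hPdef]
          refine le_trans (Polynomial.natDegree_sub_le _ _) ?_
          simp [Polynomial.natDegree_X_pow]
          omega
  have himsub : Finset.univ.image (algebraMap F E) ⊆ S := by
    intro y hy
    obtain ⟨z, -, rfl⟩ := Finset.mem_image.mp hy
    refine Finset.mem_filter.mpr ⟨Finset.mem_univ _, ?_⟩
    rw [he, ← map_pow, FiniteField.pow_card]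
  have hScardge : (Finset.univ.image (algebraMap F E)).card = q := by
    rw [Finset.card_image_of_injective _ (algebraMap F E).injective, Finset.card_univ]
  have hSeq : Finset.univ.image (algebraMap F E) = S :=
    Finset.eq_of_subset_of_card_le himsub (by rw [hScardge]; exact hScard)
  -- finrank F E = t
  have hfinrank : Module.finrank F E = t := by
    have := Module.card_eq_pow_finrank (K := F) (V := E)
    rw [hE] at this
    exact (Nat.pow_right_injective hq2 this.symm)
  -- sum over fixed points equals the RHS
  have hfixsum : ∑ x ∈ S, f x
      = ∑ x : F, (χ ^ (t * i1)) x * (χ ^ (t * i2)) (x + 1) * (χ ^ (t * i3)) (x + a) := by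
    rw [← hSeq, Finset.sum_image (fun x _ y _ h => (algebraMap F E).injective h)]
    refine Finset.sum_congr rfl (fun z _ => ?_)
    have key : ∀ (i : ℕ) (_ : i ≠ 0) (u : F),
        (χ' ^ i) (algebraMap F E u) = (χ ^ (t * i)) u := by
      intro i hi u
      rw [MulChar.pow_apply' _ hi, hχ', Algebra.norm_algebraMap, hfinrank,
        MulChar.pow_apply' _ (Nat.mul_ne_zero ht.ne_zero hi), map_pow, ← pow_mul]
    show (χ' ^ i1) (algebraMap F E z) * (χ' ^ i2) (algebraMap F E z + 1)
        * (χ' ^ i3) (algebraMap F E z + algebraMap F E a) = _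
    rw [show (algebraMap F E z + 1 : E) = algebraMap F E (z + 1) by rw [map_add, map_one],
      show (algebraMap F E z + algebraMap F E a : E) = algebraMap F E (z + a) by rw [map_add],
      key i1 hi1, key i2 hi2, key i3 hi3]
  refine ⟨w, hw, ?_⟩
  rw [hsum, hfixsum]
  ring
end

section
/- Let q = p^f with p prime, let χ be a multiplicative character of F_q of order N > 1, let a ∈ F_p^* \ {1} (regarded in F_q), and let i1, i2, i3 be integers with i1, i2, i3 ≢ 0 (mod N). Let Φ2 be the set of all monic polynomials of degree 2 over F_q and for g ∈ Φ2 set λ(g) = χ^{i1}(g(0)) χ^{i2}(g(−1)) χ^{i3}(g(−a)) (with χ(0) = 0). Then Σ_{g∈Φ2} λ(g) = χ^{i1}(a) χ^{−i2}(a) · q if χ^{i2}χ^{i3} is trivial, and Σ_{g∈Φ2} λ(g) = χ^{−i2}(−a) · (χ^{i2}χ^{i3})(a²−a) · χ^{i1}(a) · J(χ^{i2}, χ^{i3}) · J(χ^{i1}, χ^{i2}χ^{i3}) if χ^{i2}χ^{i3} is nontrivial. -/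
open Finset

lemma aux_shift {F : Type*} [Field F] [Fintype F] (χ2 χ3 : MulChar F ℂ) {a s : F}
    (ha : a ≠ 0) (hs : s ≠ 0) :
    ∑ v : F, χ2 v * χ3 (a * v + s) = χ2 (-s * a⁻¹) * χ3 s * jacobiSum χ2 χ3 := by
  have ht : -s * a⁻¹ ≠ 0 := by simp [hs, ha]
  rw [← Equiv.sum_comp (Equiv.mulLeft₀ (-s * a⁻¹) ht) (fun v => χ2 v * χ3 (a * v + s))]
  simp only [Equiv.mulLeft₀_apply]
  have key : ∀ x : F, a * (-s * a⁻¹ * x) + s = s * (1 - x) := by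
    intro x; field_simp; ring
  simp only [key, map_mul]
  rw [jacobiSum, Finset.mul_sum]
  exact Finset.sum_congr rfl fun x _ => by ring

lemma aux_jacobi {F : Type*} [Field F] [Fintype F] (χ1 ψ : MulChar F ℂ) {a : F}
    (ha : a ≠ 0) :
    ∑ c : F, χ1 c * ψ (c - a) = χ1 a * ψ (-a) * jacobiSum χ1 ψ := by
  rw [← Equiv.sum_comp (Equiv.mulLeft₀ a ha) (fun c => χ1 c * ψ (c - a))]
  simp only [Equiv.mulLeft₀_apply]
  have key : ∀ x : F, a * x - a = (-a) * (1 - x) := by intro x; ring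
  simp only [key, map_mul]
  rw [jacobiSum, Finset.mul_sum]
  exact Finset.sum_congr rfl fun x _ => by ring


open Polynomial in
/-- Equation (2.10): let `χ` be a multiplicative character of `𝔽_q` (`q = p^f`) of order
`N > 1`, `a ∈ 𝔽_p^* \ {1}` (regarded in `𝔽_q`) and `i₁,i₂,i₃ ≢ 0 (mod N)`.  For a monic
quadratic `g`, set `λ(g) = χ^{i₁}(g(0)) χ^{i₂}(g(-1)) χ^{i₃}(g(-a))`.  Then
`Σ_{g∈Φ₂} λ(g) = χ^{i₁}(a) χ^{-i₂}(a) q` if `χ^{i₂}χ^{i₃}` is trivial, and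
`Σ_{g∈Φ₂} λ(g) = χ^{-i₂}(-a)(χ^{i₂}χ^{i₃})(a²-a) χ^{i₁}(a) J(χ^{i₂},χ^{i₃})
J(χ^{i₁},χ^{i₂}χ^{i₃})` otherwise, where `Φ₂` is the set of monic quadratics over `𝔽_q`. -/
theorem sum_over_monic_quadratics
    (p f : ℕ) (hp : p.Prime) (F : Type*) [Field F] [Fintype F]
    (hF : Fintype.card F = p ^ f)
    (N : ℕ) (hN : 1 < N) (χ : MulChar F ℂ) (hχ : orderOf χ = N)
    (a : F) (ha0 : a ≠ 0) (ha1 : a ≠ 1) (hap : a ^ p = a)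
    (i1 i2 i3 : ℕ) (h1 : ¬ N ∣ i1) (h2 : ¬ N ∣ i2) (h3 : ¬ N ∣ i3) :
    (χ ^ (i2 + i3) = 1 →
      (∑ b : F, ∑ c : F,
          (χ ^ i1) ((X ^ 2 + C b * X + C c : F[X]).eval 0) *
            (χ ^ i2) ((X ^ 2 + C b * X + C c : F[X]).eval (-1)) *
            (χ ^ i3) ((X ^ 2 + C b * X + C c : F[X]).eval (-a))) =
        (χ ^ i1) a * (χ ^ i2)⁻¹ a * (Fintype.card F : ℂ)) ∧
      (χ ^ (i2 + i3) ≠ 1 →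
        (∑ b : F, ∑ c : F,
            (χ ^ i1) ((X ^ 2 + C b * X + C c : F[X]).eval 0) *
              (χ ^ i2) ((X ^ 2 + C b * X + C c : F[X]).eval (-1)) *
              (χ ^ i3) ((X ^ 2 + C b * X + C c : F[X]).eval (-a))) =
          (χ ^ i2)⁻¹ (-a) * (χ ^ (i2 + i3)) (a ^ 2 - a) * (χ ^ i1) a *
            jacobiSum (χ ^ i2) (χ ^ i3) * jacobiSum (χ ^ i1) (χ ^ (i2 + i3))) := by
  classical
  have hpow : χ ^ (i2 + i3) = χ ^ i2 * χ ^ i3 := pow_add χ i2 i3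
  have hχ1 : χ ^ i1 ≠ 1 := fun h => h1 (hχ ▸ orderOf_dvd_of_pow_eq_one h)
  have hχ2 : χ ^ i2 ≠ 1 := fun h => h2 (hχ ▸ orderOf_dvd_of_pow_eq_one h)
  have ha1' : (1 : F) - a ≠ 0 := sub_ne_zero.mpr (Ne.symm ha1)
  -- Step 1: rewrite the double sum
  have hS : (∑ b : F, ∑ c : F,
          (χ ^ i1) ((X ^ 2 + C b * X + C c : F[X]).eval 0) *
            (χ ^ i2) ((X ^ 2 + C b * X + C c : F[X]).eval (-1)) *
            (χ ^ i3) ((X ^ 2 + C b * X + C c : F[X]).eval (-a)))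
      = ∑ c : F, (χ ^ i1) c *
          ∑ v : F, (χ ^ i2) v * (χ ^ i3) (a * v + (1 - a) * (c - a)) := by
    rw [Finset.sum_comm]
    refine Finset.sum_congr rfl fun c _ => ?_
    rw [Finset.mul_sum,
      ← Equiv.sum_comp (Equiv.subLeft (1 + c))
        (fun v => (χ ^ i1) c * ((χ ^ i2) v * (χ ^ i3) (a * v + (1 - a) * (c - a))))]
    refine Finset.sum_congr rfl fun b _ => ?_
    have e0 : (X ^ 2 + C b * X + C c : F[X]).eval 0 = c := by simp
    have e1 : (X ^ 2 + C b * X + C c : F[X]).eval (-1) = 1 + c - b := by simp; ring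
    have e2 : (X ^ 2 + C b * X + C c : F[X]).eval (-a)
        = a * (1 + c - b) + (1 - a) * (c - a) := by simp; ring
    rw [e0, e1, e2]
    simp only [Equiv.subLeft_apply]
    ring
  -- Step 2: the common evaluation
  have main : (∑ b : F, ∑ c : F,
          (χ ^ i1) ((X ^ 2 + C b * X + C c : F[X]).eval 0) *
            (χ ^ i2) ((X ^ 2 + C b * X + C c : F[X]).eval (-1)) *
            (χ ^ i3) ((X ^ 2 + C b * X + C c : F[X]).eval (-a)))
      = (χ ^ i1) a * (χ ^ i3) a * (∑ v : F, (χ ^ i2 * χ ^ i3) v)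
        + (χ ^ i2) (-a⁻¹) * (χ ^ i2 * χ ^ i3) (1 - a) * jacobiSum (χ ^ i2) (χ ^ i3)
          * ((χ ^ i1) a * (χ ^ i2 * χ ^ i3) (-a)
            * jacobiSum (χ ^ i1) (χ ^ i2 * χ ^ i3)) := by
    rw [hS, ← Finset.add_sum_erase _ _ (Finset.mem_univ a)]
    congr 1
    · -- the `c = a` term
      simp only [sub_self, mul_zero, add_zero, map_mul, MulChar.mul_apply,
        Finset.mul_sum]
      exact Finset.sum_congr rfl fun v _ => by ring
    · -- the `c ≠ a` terms
      have step : ∀ c ∈ univ.erase a,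
          (χ ^ i1) c * ∑ v : F, (χ ^ i2) v * (χ ^ i3) (a * v + (1 - a) * (c - a))
            = ((χ ^ i2) (-a⁻¹) * (χ ^ i2 * χ ^ i3) (1 - a) * jacobiSum (χ ^ i2) (χ ^ i3))
              * ((χ ^ i1) c * (χ ^ i2 * χ ^ i3) (c - a)) := by
        intro c hc
        have hca : c - a ≠ 0 := sub_ne_zero.mpr (Finset.ne_of_mem_erase hc)
        have hs : (1 - a) * (c - a) ≠ 0 := mul_ne_zero ha1' hca
        rw [aux_shift _ _ ha0 hs,
          show -((1 - a) * (c - a)) * a⁻¹ = (-a⁻¹) * ((1 - a) * (c - a)) by ring]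
        simp only [map_mul, MulChar.mul_apply]
        ring
      rw [Finset.sum_congr rfl step, ← Finset.mul_sum,
        Finset.sum_erase _ (by simp [MulChar.map_zero]), aux_jacobi _ _ ha0]
  constructor
  · -- trivial case
    intro htriv
    have hone : χ ^ i2 * χ ^ i3 = 1 := by rw [← hpow]; exact htriv
    have h3eq : χ ^ i3 = (χ ^ i2)⁻¹ := eq_inv_iff_mul_eq_one.mpr (by rw [mul_comm]; exact hone)
    have hJ1 : jacobiSum (χ ^ i1) (χ ^ i2 * χ ^ i3) = -1 := by
      rw [hone, jacobiSum_comm, jacobiSum_one_nontrivial hχ1]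
    have hJ23 : jacobiSum (χ ^ i2) (χ ^ i3) = -(χ ^ i2) (-1) := by
      rw [h3eq, jacobiSum_nontrivial_inv hχ2]
    have hsum1 : (∑ v : F, (χ ^ i2 * χ ^ i3) v) = (Fintype.card F : ℂ) - 1 := by
      rw [hone, MulChar.sum_one_eq_card_units, Fintype.card_units]
      have : 1 ≤ Fintype.card F := Fintype.card_pos
      push_cast [this]; ring
    have hprod : (χ ^ i2) (-a⁻¹) * (χ ^ i2) (-1) = (χ ^ i2)⁻¹ a := by
      rw [← map_mul, show (-a⁻¹) * (-1 : F) = a⁻¹ by ring, MulChar.inv_apply,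
        Ring.inverse_eq_inv]
    rw [main, hJ1, hJ23, hsum1, hone, h3eq,
      MulChar.one_apply (Ne.isUnit ha1'), MulChar.one_apply (Ne.isUnit (neg_ne_zero.mpr ha0)),
      show (χ ^ i2)⁻¹ a = (χ ^ i2) (-a⁻¹) * (χ ^ i2) (-1) from hprod.symm]
    ring
  · -- nontrivial case
    intro hnt
    have hone : χ ^ i2 * χ ^ i3 ≠ 1 := by rw [← hpow]; exact hnt
    rw [main, MulChar.sum_eq_zero_of_ne_one hone, mul_zero, zero_add, hpow,
      MulChar.inv_apply, Ring.inverse_eq_inv, inv_neg,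
      show a ^ 2 - a = (-a) * (1 - a) by ring, map_mul]
    ring
end

section
/- Let p1 be a prime, m ≥ 1, N = 2p1^m, and let p be an odd prime not dividing N such that 2 belongs to the subgroup ⟨p⟩ of (Z/p1^m Z)^* and gcd(p1, p−1) = 1. Let f = ord_N(p), q = p^f, and let χ_N be a multiplicative character of F_q of order N. Then G_q(χ_N) = G_q(χ_N^{p1^m}), i.e., the Gauss sum of χ_N equals the Gauss sum of the quadratic character χ_N^{p1^m} of F_q. -/
/-!
Let `t = p₁ ^ m` and write `χ = η * χ'` with `η = χ ^ t` quadratic and `χ' = χ ^ (t + 1)`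
of odd order dividing `t`. As `2 ≡ p ^ k (mod t)`, the character `χ' ^ 2` is a Galois
conjugate of `χ'`, so `g(χ'²) = g(χ')` and hence `J(χ', χ') = g(χ')`. The substitution
`x = (1 + u) / 2` gives `χ'(4) J(χ', χ') = J(η, χ')`, and `χ'(4) = 1` because `4` lies in
`𝔽_p^*`, whose order `p - 1` is prime to `t`. Therefore
`g(η) g(χ') = J(η, χ') g(ηχ') = g(χ') g(χ)`, and `g(χ') ≠ 0`.
-/

open Finset

/-- The Gauss sum `G_q(χ) = Σ_{x∈𝔽_q^*} χ(x) ψ(x)` of a multiplicative character `χ`,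
where `ψ(x) = ζ_p^{Tr_{q/p}(x)}` is the canonical additive character of `𝔽_q`
(`ζ_p = exp(2πi/p)`). -/
noncomputable def gaussSumC (p : ℕ) (F : Type*) [Field F] [Fintype F]
    [Algebra (ZMod p) F] (χ : MulChar F ℂ) : ℂ :=
  ∑ x : F, χ x *
    Complex.exp (2 * Real.pi * Complex.I * ((Algebra.trace (ZMod p) F x).val : ℂ) / p)

theorem MulChar.apply_eq_one_of_coprime {M R : Type*} [CommMonoid M] [CommRing R]
    {χ : MulChar M R} {t n : ℕ} (hχ : χ ^ t = 1) {a : Mˣ} (ha : a ^ n = 1)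
    (htn : t.Coprime n) :
    χ a = 1 := by
  have ht : χ a ^ t = 1 := by rw [← MulChar.pow_apply_coe, hχ, MulChar.one_apply_coe]
  have hn : χ a ^ n = 1 := by
    rw [← map_pow, ← Units.val_pow_eq_pow_val, ha, Units.val_one, map_one]
  simpa [htn] using pow_gcd_eq_one.mpr ⟨ht, hn⟩

theorem Nat.Coprime.odd_of_prime_sub_one {p t : ℕ} (ht : t.Coprime (p - 1)) (hp : p.Prime)
    (hp2 : p ≠ 2) : Odd t :=
  Nat.coprime_two_right.mp <| ht.coprime_dvd_right (hp.even_sub_one hp2).two_dvd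

theorem CharP.natCast_pow_sub_one_eq_one {F : Type*} [Field F] (p : ℕ) [Fact p.Prime]
    [CharP F p] {n : ℕ} (hn : (n : F) ≠ 0) : (n : F) ^ (p - 1) = 1 := by
  have hn' : (n : ZMod p) ≠ 0 := fun h =>
    hn (by rw [← map_natCast (ZMod.castHom dvd_rfl F), h, map_zero])
  rw [← map_natCast (ZMod.castHom dvd_rfl F), ← map_pow, ZMod.pow_card_sub_one_eq_one hn',
    map_one]

section QuadraticChar

variable {F : Type*} [Field F] [Fintype F] [DecidableEq F] {R : Type*} [CommRing R]

theorem MulChar.apply_eq_quadraticChar [IsDomain R] {η : MulChar F R} (hη2 : η ^ 2 = 1)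
    (hη : η ≠ 1) (a : F) : η a = quadraticChar F a := by
  have apply_mul_self {c : F} (hc : c ≠ 0) : η c * η c = 1 := by
    rw [← sq, ← MulChar.pow_apply' η two_ne_zero, hη2,
      MulChar.one_apply (isUnit_iff_ne_zero.mpr hc)]
  rcases eq_or_ne a 0 with rfl | ha
  · simp
  by_cases hsq : IsSquare a
  · obtain ⟨c, rfl⟩ := hsq
    rw [map_mul, apply_mul_self (left_ne_zero_of_mul ha),
      (quadraticChar_one_iff_isSquare ha).mpr ⟨c, rfl⟩, Int.cast_one]
  -- a nonsquare `b` with `η b = -1` makes `a * b` a square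
  obtain ⟨b, hb⟩ := MulChar.ne_one_iff.mp hη
  have hb2 : η b = -1 := (mul_self_eq_one_iff.mp (apply_mul_self b.ne_zero)).resolve_left hb
  have hb_sq : ¬ IsSquare (b : F) := fun ⟨c, hc⟩ =>
    hb (by rw [hc, map_mul, apply_mul_self (left_ne_zero_of_mul (hc ▸ b.ne_zero))])
  obtain ⟨c, hc⟩ : IsSquare (a * b) := by
    rw [← quadraticChar_one_iff_isSquare (mul_ne_zero ha b.ne_zero), map_mul,
      quadraticChar_neg_one_iff_not_isSquare.mpr hsq,
      quadraticChar_neg_one_iff_not_isSquare.mpr hb_sq, neg_one_mul, neg_neg]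
  have hc_mul_self := apply_mul_self (left_ne_zero_of_mul (hc ▸ mul_ne_zero ha b.ne_zero))
  rw [← map_mul, ← hc, map_mul, hb2] at hc_mul_self
  rw [quadraticChar_neg_one_iff_not_isSquare.mpr hsq, Int.cast_neg, Int.cast_one]
  linear_combination -hc_mul_self

theorem sum_comp_sq (hF : ringChar F ≠ 2) (f : F → R) :
    ∑ u : F, f (u ^ 2) = ∑ s : F, (quadraticChar F s + 1) * f s := by
  rw [← sum_fiberwise univ (· ^ 2)]
  refine sum_congr rfl fun s _ => ?_
  rw [sum_congr rfl fun u hu => congrArg f (mem_filter.mp hu).2, sum_const, nsmul_eq_mul]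
  have hcard := quadraticChar_card_sqrts hF s
  rw [Set.toFinset_ofPred] at hcard
  rw [← Int.cast_one, ← Int.cast_add, ← hcard, Int.cast_natCast]

theorem mul_jacobiSum_self_eq_jacobiSum_quadraticChar [IsDomain R] (hF : ringChar F ≠ 2)
    {χ : MulChar F R} (hχ : χ ≠ 1) :
    χ 4 * jacobiSum χ χ = jacobiSum ((quadraticChar F).ringHomComp (Int.castRingHom R)) χ := by
  have h2 : (2 : F) ≠ 0 := Ring.two_ne_zero hF
  have sum_one_sub : ∑ s : F, χ (1 - s) = 0 := by
    rw [← MulChar.sum_eq_zero_of_ne_one hχ]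
    exact (Equiv.subLeft 1).sum_comp χ
  calc χ 4 * jacobiSum χ χ = ∑ u : F, χ (1 - u ^ 2) := by
        -- substitute `x = (1 + u) / 2`, so that `4 x (1 - x) = 1 - u ^ 2`
        rw [jacobiSum, mul_sum, ← Equiv.sum_comp ((Equiv.addLeft 1).trans
          (Equiv.mulRight₀ 2⁻¹ (inv_ne_zero h2)))]
        refine sum_congr rfl fun u _ => ?_
        simp only [Equiv.trans_apply, Equiv.coe_addLeft, Equiv.mulRight₀_apply, ← map_mul]
        congr 1
        field_simp
        ring
    _ = ∑ s : F, (quadraticChar F s + 1) * χ (1 - s) := sum_comp_sq hF fun s => χ (1 - s)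
    _ = _ := by
        simp only [add_mul, one_mul, sum_add_distrib, sum_one_sub, add_zero, jacobiSum]
        rfl

end QuadraticChar

section GaussSum

variable {F : Type*} [Field F] [Fintype F] {R : Type*} [CommRing R] (p : ℕ) [Fact p.Prime]
  [CharP F p] {ψ : AddChar F R}

theorem gaussSum_pow_char (χ : MulChar F R) (hψ : ∀ x, ψ (x ^ p) = ψ x) :
    gaussSum (χ ^ p) ψ = gaussSum χ ψ :=
  Fintype.sum_equiv (frobeniusEquiv F p).toEquiv _ _ fun x => by
    change (χ ^ p) x * ψ x = χ (x ^ p) * ψ (x ^ p)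
    rw [MulChar.pow_apply' χ (Fact.out : p.Prime).ne_zero, map_pow, hψ]

theorem gaussSum_pow_char_pow (χ : MulChar F R) (hψ : ∀ x, ψ (x ^ p) = ψ x) (k : ℕ) :
    gaussSum (χ ^ p ^ k) ψ = gaussSum χ ψ := by
  induction k with
  | zero => rw [pow_zero, pow_one]
  | succ k ih => rw [pow_succ, pow_mul, gaussSum_pow_char p _ hψ, ih]

theorem gaussSum_quadratic_mul_eq [IsDomain R] (hp2 : p ≠ 2) (hR : (Fintype.card F : R) ≠ 0)
    (hψ : ψ.IsPrimitive) (hψp : ∀ x, ψ (x ^ p) = ψ x) {η χ : MulChar F R}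
    (hη2 : η ^ 2 = 1) (hη : η ≠ 1) (hχ : χ ≠ 1) {t k : ℕ} (hχt : χ ^ t = 1) (ht : t.Coprime (p - 1))
    (hk : p ^ k ≡ 2 [MOD t]) : gaussSum (η * χ) ψ = gaussSum η ψ := by
  classical
  have hF : ringChar F ≠ 2 := by rwa [ringChar.eq F p]
  have hχχ : χ * χ ≠ 1 := fun h => hχ <| by
    have := pow_gcd_eq_one.mpr ⟨(sq χ).trans h, hχt⟩
    rwa [Nat.coprime_two_left.mpr (ht.odd_of_prime_sub_one Fact.out hp2), pow_one] at this
  have hηχ : η * χ ≠ 1 := fun h => hχχ <| by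
    calc χ * χ = η ^ 2 * χ ^ 2 := by rw [hη2, one_mul, sq]
      _ = 1 := by rw [← mul_pow, h, one_pow]
  have hGχ : gaussSum χ ψ ≠ 0 := gaussSum_ne_zero_of_nontrivial hR hχ hψ
  have hG_mul_self : gaussSum (χ * χ) ψ = gaussSum χ ψ := by
    have : χ ^ p ^ k = χ ^ 2 :=
      pow_eq_pow_iff_modEq.mpr (hk.of_dvd (orderOf_dvd_of_pow_eq_one hχt))
    rw [← sq, ← this, gaussSum_pow_char_pow p χ hψp k]
  have hJ_self : jacobiSum χ χ = gaussSum χ ψ := by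
    have := jacobiSum_mul_nontrivial hχχ ψ
    rw [hG_mul_self] at this
    exact mul_left_cancel₀ hGχ this
  have hχ4 : χ 4 = 1 := by
    have h4 : ((4 : ℕ) : F) ≠ 0 := by
      rw [show ((4 : ℕ) : F) = 2 * 2 by norm_num]
      exact mul_ne_zero (Ring.two_ne_zero hF) (Ring.two_ne_zero hF)
    simpa using χ.apply_eq_one_of_coprime hχt (a := Units.mk0 _ h4)
      (Units.ext (by simpa using CharP.natCast_pow_sub_one_eq_one p h4)) ht
  have hJη : jacobiSum η χ = jacobiSum χ χ := by
    have hη_eq : η = (quadraticChar F).ringHomComp (Int.castRingHom R) :=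
      MulChar.ext fun a => MulChar.apply_eq_quadraticChar hη2 hη a
    rw [hη_eq, ← mul_jacobiSum_self_eq_jacobiSum_quadraticChar hF hχ, hχ4, one_mul]
  have := jacobiSum_mul_nontrivial hηχ ψ
  rw [hJη, hJ_self] at this
  exact mul_right_cancel₀ hGχ this

theorem gaussSum_eq_gaussSum_pow_of_orderOf_eq_two_mul [IsDomain R] (hp2 : p ≠ 2)
    (hR : (Fintype.card F : R) ≠ 0) (hψ : ψ.IsPrimitive) (hψp : ∀ x, ψ (x ^ p) = ψ x)
    {χ : MulChar F R} {t k : ℕ} (hχ : orderOf χ = 2 * t) (ht : t.Coprime (p - 1))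
    (hk : p ^ k ≡ 2 [MOD t]) :
    gaussSum χ ψ = gaussSum (χ ^ t) ψ := by
  obtain rfl | ht1 := eq_or_ne t 1
  · rw [pow_one]
  have ht0 : 0 < t := by have := χ.orderOf_pos; omega
  obtain ⟨j, hj⟩ := ht.odd_of_prime_sub_one Fact.out hp2
  have pow_eq_one_iff (n : ℕ) : χ ^ n = 1 ↔ 2 * t ∣ n := by
    rw [← hχ, orderOf_dvd_iff_pow_eq_one]
  have hdecomp : χ ^ t * χ ^ (t + 1) = χ := by
    rw [← pow_add, show t + (t + 1) = 2 * t + 1 by ring, pow_succ, (pow_eq_one_iff _).2 dvd_rfl,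
      one_mul]
  conv_lhs => rw [← hdecomp]
  refine gaussSum_quadratic_mul_eq p hp2 hR hψ hψp ?_ ?_ ?_ (t := t) ?_ ht hk
  · rw [← pow_mul, pow_eq_one_iff, mul_comm]
  · rw [Ne, pow_eq_one_iff]
    exact fun h => by have := Nat.le_of_dvd ht0 h; omega
  · rw [Ne, pow_eq_one_iff]
    exact fun h => by have := Nat.le_of_dvd (by omega) h; omega
  · rw [← pow_mul, pow_eq_one_iff]
    exact ⟨j + 1, by rw [hj]; ring⟩

end GaussSum

noncomputable def traceAddChar (p : ℕ) [NeZero p] (F : Type*) [Field F] [Algebra (ZMod p) F] :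
    AddChar F ℂ :=
  ZMod.stdAddChar.compAddMonoidHom (Algebra.trace (ZMod p) F).toAddMonoidHom

section TraceAddChar

variable (p : ℕ) [Fact p.Prime] (F : Type*) [Field F] [Fintype F] [Algebra (ZMod p) F]

theorem gaussSumC_eq_gaussSum (χ : MulChar F ℂ) :
    gaussSumC p F χ = gaussSum χ (traceAddChar p F) :=
  sum_congr rfl fun x _ => by
    rw [traceAddChar, AddChar.compAddMonoidHom_apply, ZMod.stdAddChar_apply, ZMod.toCircle_apply]
    rfl

theorem traceAddChar_isPrimitive : (traceAddChar p F).IsPrimitive := by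
  refine AddChar.IsPrimitive.of_ne_one (AddChar.ne_one_iff.mpr ?_)
  obtain ⟨a, ha⟩ := Algebra.trace_surjective (ZMod p) F 1
  refine ⟨a, fun h => one_ne_zero (α := ZMod p) (ZMod.injective_stdAddChar ?_)⟩
  rwa [AddChar.map_zero_eq_one, ← ha]

theorem traceAddChar_pow_char (x : F) : traceAddChar p F (x ^ p) = traceAddChar p F x := by
  have := Algebra.trace_eq_of_algEquiv (FiniteField.frobeniusAlgEquivOfAlgebraic (ZMod p) F) x
  rw [FiniteField.coe_frobeniusAlgEquivOfAlgebraic, ZMod.card] at this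
  simp only [traceAddChar, AddChar.compAddMonoidHom_apply, LinearMap.toAddMonoidHom_coe, this]

end TraceAddChar

theorem gauss_sum_eq_quadratic_gauss_sum_general
    (p1 m N p : ℕ)
    (hN : N = 2 * p1 ^ m)
    (hp : p.Prime) (hpodd : Odd p)
    (h2 : ∃ k : ℕ, (p : ZMod (p1 ^ m)) ^ k = 2)
    (hcop : Nat.Coprime p1 (p - 1))
    (F : Type*) [Field F] [Fintype F] [Algebra (ZMod p) F]
    (χ : MulChar F ℂ) (hχ : orderOf χ = N) :
    gaussSumC p F χ = gaussSumC p F (χ ^ p1 ^ m) := by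
  have := Fact.mk hp
  have : CharP F p := charP_of_injective_algebraMap (algebraMap (ZMod p) F).injective p
  obtain ⟨k, hk⟩ := h2
  have hk' : p ^ k ≡ 2 [MOD p1 ^ m] :=
    (ZMod.natCast_eq_natCast_iff _ _ _).mp (by push_cast; exact hk)
  rw [gaussSumC_eq_gaussSum, gaussSumC_eq_gaussSum]
  exact gaussSum_eq_gaussSum_pow_of_orderOf_eq_two_mul p (hpodd.ne_two_of_dvd_nat dvd_rfl)
    (Nat.cast_ne_zero.mpr Fintype.card_ne_zero) (traceAddChar_isPrimitive p F)
    (traceAddChar_pow_char p F) (hχ.trans hN) (hcop.pow_left m) hk'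

/-- Let `p₁` be a prime, `N = 2p₁^m`, and `p` an odd prime not dividing `N` with
`2 ∈ ⟨p⟩ ≤ (ℤ/p₁^m ℤ)*` and `gcd(p₁, p-1) = 1`.  With `f = ord_N(p)`, `q = p^f`, and
`χ_N` a multiplicative character of `𝔽_q` of order `N`, the Gauss sum of `χ_N` equals
the Gauss sum of the quadratic character `χ_N^{p₁^m}`. -/
theorem gauss_sum_eq_quadratic_gauss_sum
    (p1 m N p f : ℕ)
    (hp1 : p1.Prime) (hm : 1 ≤ m) (hN : N = 2 * p1 ^ m)
    (hp : p.Prime) (hpodd : Odd p) (hpN : ¬ p ∣ N)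
    (h2 : ∃ k : ℕ, (p : ZMod (p1 ^ m)) ^ k = 2)
    (hcop : Nat.Coprime p1 (p - 1))
    (hf : f = orderOf (p : ZMod N))
    (F : Type*) [Field F] [Fintype F] [Algebra (ZMod p) F]
    (hF : Fintype.card F = p ^ f)
    (χ : MulChar F ℂ) (hχ : orderOf χ = N) :
    gaussSumC p F χ = gaussSumC p F (χ ^ p1 ^ m) :=
  gauss_sum_eq_quadratic_gauss_sum_general p1 m N p hN hp hpodd h2 hcop F χ hχ
end
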